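/- arXiv:1301.2492 — 7 statements merged into one kernel-verified Lean document; each statement's English description precedes it below -/
import Mathlib

section
/- Uniqueness lemma (algebraic core). Let G ∈ Mat_n(ℝ) be symmetric and invertible and let L ∈ Mat_n(ℝ) be G-selfadjoint (Lᵀ G = G L) and regular, meaning that for every complex eigenvalue μ of L one has dim_ℂ ker(L − μ·I) = 1 (equivalently, the minimal polynomial of L equals its characteristic polynomial). If B ∈ Mat_n(ℝ) satisfies B L = L B and Bᵀ G + G B = 0 (B is G-skew-adjoint), then B = 0. -/
/-!
Over an algebraically closed field, an endomorphism all of whose eigenspaces have dimension at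
most one has a cyclic vector: on each generalised eigenspace the nilpotent part has a
one-dimensional kernel, so its nilpotency index is the dimension of that space, and the sum of
these local cyclic vectors is cyclic because an invariant subspace contains the generalised
eigenspace components of each of its vectors. Hence every matrix commuting with the complexified
`L` is a polynomial `p(L)`. Since `L` is `G`-selfadjoint, so is `p(L)`; being also `G`-skew-adjoint
it satisfies `2 G B = 0`, and `B = 0` because `G` is invertible.
-/

open Polynomial Module LinearMap Matrix

theorem LinearMap.finrank_comap_le_finrank_add_finrank_ker {K V W : Type*} [Field K]
    [AddCommGroup V] [Module K V] [AddCommGroup W] [Module K W] [FiniteDimensional K V]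
    [FiniteDimensional K W] (f : V →ₗ[K] W) (p : Submodule K W) :
    finrank K (p.comap f) ≤ finrank K p + finrank K (ker f) := by
  let g := f.domRestrict (p.comap f)
  have hrange : finrank K (range g) ≤ finrank K p := by
    rw [range_domRestrict]
    exact Submodule.finrank_mono (Submodule.map_comap_le f p)
  have hker : finrank K (ker g) ≤ finrank K (ker f) := by
    rw [← Submodule.finrank_map_subtype_eq]
    refine Submodule.finrank_mono ?_
    rintro _ ⟨x, hx, rfl⟩
    simpa [g] using hx
  have := finrank_range_add_finrank_ker g
  omega

namespace Module.End

variable {K V : Type*} [Field K] [AddCommGroup V] [Module K V]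

noncomputable def cyclicSubspace (f : End K V) (v : V) : Submodule K V :=
  LinearMap.range ((LinearMap.applyₗ v).comp (aeval f).toLinearMap)

variable {f g : End K V} {v : V}

theorem mem_cyclicSubspace {x : V} : x ∈ f.cyclicSubspace v ↔ ∃ p : K[X], aeval f p v = x :=
  Iff.rfl

theorem self_mem_cyclicSubspace : v ∈ f.cyclicSubspace v :=
  ⟨1, by simp⟩

theorem mapsTo_cyclicSubspace : ∀ x ∈ f.cyclicSubspace v, f x ∈ f.cyclicSubspace v := by
  rintro _ ⟨p, rfl⟩
  exact ⟨X * p, by simp⟩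

theorem cyclicSubspace_le {W : Submodule K V} (hv : v ∈ W) (hW : ∀ x ∈ W, f x ∈ W) :
    f.cyclicSubspace v ≤ W := by
  rintro _ ⟨p, rfl⟩
  exact aeval_apply_smul_mem_of_le_comap hv p f hW

theorem eq_aeval_of_cyclicSubspace_eq_top (hv : f.cyclicSubspace v = ⊤) (hfg : Commute f g) :
    ∃ p : K[X], g = aeval f p := by
  have hmem (x : V) : x ∈ f.cyclicSubspace v := hv ▸ Submodule.mem_top
  obtain ⟨p, hp⟩ := mem_cyclicSubspace.mp (hmem (g v))
  refine ⟨p, LinearMap.ext fun x ↦ ?_⟩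
  obtain ⟨q, rfl⟩ := mem_cyclicSubspace.mp (hmem x)
  have hgq : Commute g (aeval f q) :=
    Algebra.commute_of_mem_adjoin_singleton_of_commute (aeval_mem_adjoin_singleton K f) hfg.symm
  calc g (aeval f q v) = aeval f q (aeval f p v) := by rw [← mul_apply, hgq.eq, mul_apply, hp]
    _ = aeval f p (aeval f q v) := by rw [← mul_apply, ← map_mul, mul_comm, map_mul, mul_apply]

section FiniteDimensional

variable [FiniteDimensional K V]

theorem finrank_ker_pow_le (f : End K V) (k : ℕ) :
    finrank K (ker (f ^ k)) ≤ k * finrank K (ker f) := by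
  induction k with
  | zero => simp [Module.End.one_eq_id]
  | succ k ih =>
    rw [pow_succ, Module.End.mul_eq_comp, ker_comp, add_one_mul]
    exact (finrank_comap_le_finrank_add_finrank_ker f _).trans (by omega)

theorem finrank_le_nilpotencyClass (hf : IsNilpotent f) (hker : finrank K (ker f) ≤ 1) :
    finrank K V ≤ nilpotencyClass f := by
  have := finrank_ker_pow_le f (nilpotencyClass f)
  rw [pow_nilpotencyClass hf, ker_zero, finrank_top] at this
  nlinarith

theorem pow_finrank_eq_zero (hf : IsNilpotent f) : f ^ finrank K V = 0 := by
  simpa [hf.charpoly_eq_X_pow_finrank] using f.aeval_self_charpoly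

theorem lt_finrank_cyclicSubspace (hf : IsNilpotent f) {k : ℕ} (hv : (f ^ k) v ≠ 0) :
    k < finrank K (f.cyclicSubspace v) := by
  let W := f.cyclicSubspace v
  have hW : (f ^ finrank K W) v = 0 := by
    have := congr($(pow_finrank_eq_zero (isNilpotent.restrict mapsTo_cyclicSubspace hf))
      ⟨v, self_mem_cyclicSubspace⟩)
    rw [pow_restrict] at this
    simpa using congr_arg Subtype.val this
  by_contra! hk
  exact hv (pow_map_zero_of_le hk hW)

theorem exists_cyclicSubspace_eq_top_of_isNilpotent (hf : IsNilpotent f)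
    (hker : finrank K (ker f) ≤ 1) : ∃ v, f.cyclicSubspace v = ⊤ := by
  cases subsingleton_or_nontrivial V with
  | inl _ => exact ⟨0, Subsingleton.elim _ _⟩
  | inr _ =>
    obtain ⟨v, hv⟩ : ∃ v, (f ^ (nilpotencyClass f - 1)) v ≠ 0 := by
      by_contra! h
      exact pow_pred_nilpotencyClass hf (LinearMap.ext h)
    refine ⟨v, Submodule.eq_top_of_finrank_eq (le_antisymm (Submodule.finrank_le _) ?_)⟩
    have := lt_finrank_cyclicSubspace hf hv
    have := finrank_le_nilpotencyClass hf hker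
    omega

theorem exists_maxGenEigenspace_le_cyclicSubspace (f : End K V) (μ : K)
    (h : finrank K (f.eigenspace μ) ≤ 1) :
    ∃ u ∈ f.maxGenEigenspace μ, f.maxGenEigenspace μ ≤ f.cyclicSubspace u := by
  let E := f.maxGenEigenspace μ
  have hE : ∀ x ∈ E, (f - μ • 1) x ∈ E := mapsTo_maxGenEigenspace_of_comm
    ((Commute.refl f).sub_right ((Commute.one_right f).smul_right μ)) μ
  let N := (f - μ • 1).restrict hE
  have hN : finrank K (ker N) ≤ 1 := by
    refine le_trans ?_ h
    rw [← Submodule.finrank_map_subtype_eq, eigenspace_def]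
    refine Submodule.finrank_mono ?_
    rintro _ ⟨x, hx, rfl⟩
    exact congr_arg Subtype.val (mem_ker.mp hx)
  obtain ⟨w, hw⟩ := exists_cyclicSubspace_eq_top_of_isNilpotent
    (isNilpotent_restrict_genEigenspace_top f μ hE) hN
  have hw_mem : w ∈ (f.cyclicSubspace w).comap E.subtype := self_mem_cyclicSubspace (f := f)
  have hN_mapsTo : ∀ y ∈ (f.cyclicSubspace w).comap E.subtype,
      N y ∈ (f.cyclicSubspace w).comap E.subtype := fun y hy ↦ by
    rw [Submodule.mem_comap, Submodule.subtype_apply, coe_restrict_apply, LinearMap.sub_apply,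
      LinearMap.smul_apply, one_apply]
    exact Submodule.sub_mem _ (mapsTo_cyclicSubspace _ hy) (Submodule.smul_mem _ μ hy)
  refine ⟨w, w.2, fun x hx ↦ cyclicSubspace_le hw_mem hN_mapsTo (x := ⟨x, hx⟩) ?_⟩
  rw [hw]
  trivial

theorem mem_of_sum_mem_of_mapsTo {W : Submodule K V} (hW : ∀ x ∈ W, f x ∈ W)
    {s : Finset K} {u : K → V} (hu : ∀ μ ∈ s, u μ ∈ f.maxGenEigenspace μ)
    (hsum : ∑ μ ∈ s, u μ ∈ W) : ∀ μ ∈ s, u μ ∈ W := by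
  classical
  have hmem : ∑ μ ∈ s, u μ ∈ W ⊓ ⨆ μ, f.maxGenEigenspace μ :=
    ⟨hsum, Submodule.sum_mem _ fun μ hμ ↦ Submodule.mem_iSup_of_mem μ (hu μ hμ)⟩
  -- Split the sum along the subspaces `W ⊓ E_μ`; by independence the two splittings agree.
  rw [Submodule.inf_iSup_genEigenspace hW, Submodule.mem_iSup_iff_exists_finset] at hmem
  obtain ⟨t, ht⟩ := hmem
  obtain ⟨w, hw⟩ := (Submodule.mem_iSup_finset_iff_exists_sum _ _).mp ht
  have huw := (iSupIndep_iff_finsetSum_eq_imp_eq _).mp f.independent_maxGenEigenspace (s ∪ t)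
    (fun μ ↦ if μ ∈ s then u μ else 0) (fun μ ↦ if μ ∈ t then (w μ : V) else 0)
    (fun μ _ ↦ ⟨by split_ifs with h; exacts [hu μ h, zero_mem _],
      by split_ifs; exacts [(w μ).2.2, zero_mem _]⟩)
    (by simp only [Finset.sum_ite_mem, Finset.union_inter_cancel_left,
      Finset.union_inter_cancel_right, hw])
  intro μ hμ
  have huw_μ := huw μ (Finset.mem_union_left t hμ)
  rw [if_pos hμ] at huw_μ
  rw [huw_μ]
  split_ifs
  exacts [(w μ).2.1, zero_mem _]

theorem exists_cyclicSubspace_eq_top [IsAlgClosed K] (f : End K V)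
    (h : ∀ μ, finrank K (f.eigenspace μ) ≤ 1) : ∃ v, f.cyclicSubspace v = ⊤ := by
  choose u hu hle using fun μ ↦ exists_maxGenEigenspace_le_cyclicSubspace f μ (h μ)
  obtain ⟨s, hs⟩ : ∃ s : Finset K, ∀ μ ∉ s, f.maxGenEigenspace μ = ⊥ :=
    ⟨(WellFoundedGT.finite_ne_bot_of_iSupIndep f.independent_maxGenEigenspace).toFinset,
      fun μ hμ ↦ by simpa using hμ⟩
  have hmem := mem_of_sum_mem_of_mapsTo mapsTo_cyclicSubspace (fun μ _ ↦ hu μ)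
    (self_mem_cyclicSubspace (f := f) (v := ∑ μ ∈ s, u μ))
  refine ⟨∑ μ ∈ s, u μ, eq_top_iff.mpr ?_⟩
  rw [← iSup_maxGenEigenspace_eq_top f]
  refine iSup_le fun μ ↦ ?_
  by_cases hμ : μ ∈ s
  · exact (hle μ).trans (cyclicSubspace_le (hmem μ hμ) mapsTo_cyclicSubspace)
  · simp [hs μ hμ]

end FiniteDimensional

end Module.End

namespace Matrix

variable {ι K : Type*} [Fintype ι] [DecidableEq ι] [Field K]

theorem IsSelfAdjoint.aeval {G L : Matrix ι ι K} (h : G.IsSelfAdjoint L) (p : K[X]) :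
    G.IsSelfAdjoint (aeval L p) := by
  have hpow (k : ℕ) : (L ^ k)ᵀ * G = G * L ^ k := by
    rw [transpose_pow]
    exact ((SemiconjBy.pow_right h.symm k).symm :)
  simp only [Matrix.IsSelfAdjoint, IsAdjointPair, aeval_eq_sum_range, transpose_sum,
    transpose_smul, Finset.sum_mul, Finset.mul_sum, smul_mul, Matrix.mul_smul, hpow]

theorem IsSkewAdjoint.eq_zero_of_isSelfAdjoint [NeZero (2 : K)] {G B : Matrix ι ι K}
    (hG : IsUnit G.det) (hskew : G.IsSkewAdjoint B) (hsa : G.IsSelfAdjoint B) : B = 0 := by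
  have h2 : (2 : K) • (G * B) = 0 := by
    rw [two_smul]
    nth_rewrite 1 [← hsa]
    rw [hskew, mul_neg, neg_add_cancel]
  have hGB : G * B = 0 := (smul_eq_zero.mp h2).resolve_left two_ne_zero
  exact ((isUnit_iff_isUnit_det G).mpr hG).mul_right_eq_zero.mp hGB

theorem IsAdjointPair.map {S : Type*} [Field S] (f : K →+* S) {J J' A A' : Matrix ι ι K}
    (h : IsAdjointPair J J' A A') :
    IsAdjointPair (f.mapMatrix J) (f.mapMatrix J') (f.mapMatrix A) (f.mapMatrix A') := by
  have := congr_arg f.mapMatrix h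
  rwa [map_mul, map_mul, RingHom.mapMatrix_apply, RingHom.mapMatrix_apply, transpose_map] at this

theorem exists_eq_aeval_of_commute [IsAlgClosed K] {L B : Matrix ι ι K}
    (hreg : ∀ μ, finrank K (Module.End.eigenspace (toLin' L) μ) ≤ 1) (hcomm : Commute L B) :
    ∃ p : K[X], B = aeval L p := by
  obtain ⟨v, hv⟩ := Module.End.exists_cyclicSubspace_eq_top (toLin' L) hreg
  obtain ⟨p, hp⟩ := Module.End.eq_aeval_of_cyclicSubspace_eq_top hv
    (hcomm.map (toLinAlgEquiv' (R := K) (n := ι)))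
  refine ⟨p, toLinAlgEquiv'.injective ?_⟩
  rw [← aeval_algHom_apply]
  exact hp

theorem finrank_eigenspace_toLin'_le_one {M : Matrix ι ι K}
    (h : ∀ μ ∈ spectrum K M, finrank K (ker (mulVecLin (M - μ • 1))) = 1) (μ : K) :
    finrank K (Module.End.eigenspace (toLin' M) μ) ≤ 1 := by
  by_cases hμ : μ ∈ spectrum K M
  · rw [Module.End.eigenspace_def, ← h μ hμ, ← toLin'_apply', map_sub, map_smul, toLin'_one]
    rfl
  · have : ¬ Module.End.HasEigenvalue (toLin' M) μ := by
      rw [Module.End.hasEigenvalue_iff_mem_spectrum]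
      change μ ∉ spectrum K (toLinAlgEquiv' M)
      rwa [AlgEquiv.spectrum_eq]
    have hbot : Module.End.eigenspace (toLin' M) μ = ⊥ := not_not.mp this
    rw [hbot, finrank_bot]
    exact zero_le_one

theorem IsSkewAdjoint.eq_zero_of_commute [IsAlgClosed K] [NeZero (2 : K)] {G L B : Matrix ι ι K}
    (hG : IsUnit G.det) (hL : G.IsSelfAdjoint L)
    (hreg : ∀ μ, finrank K (Module.End.eigenspace (toLin' L) μ) ≤ 1) (hcomm : Commute L B)
    (hB : G.IsSkewAdjoint B) : B = 0 := by
  obtain ⟨p, rfl⟩ := exists_eq_aeval_of_commute hreg hcomm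
  exact hB.eq_zero_of_isSelfAdjoint hG (hL.aeval p)

end Matrix

theorem uniqueness_lemma_algebraic_core_general
    (n : ℕ) (G L B : Matrix (Fin n) (Fin n) ℝ)
    (hGinv : IsUnit G.det)
    (hsa : Lᵀ * G = G * L)
    (hreg : ∀ μ : ℂ, μ ∈ spectrum ℂ (L.map (algebraMap ℝ ℂ)) →
      Module.finrank ℂ
        (LinearMap.ker (Matrix.mulVecLin (L.map (algebraMap ℝ ℂ) - μ • 1))) = 1)
    (hcomm : B * L = L * B)
    (hskew : Bᵀ * G + G * B = 0) :
    B = 0 := by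
  let φ := (algebraMap ℝ ℂ).mapMatrix (m := Fin n)
  have hB : G.IsSkewAdjoint B := (eq_neg_of_add_eq_zero_left hskew).trans (mul_neg _ _).symm
  have hBC : (φ G).IsSkewAdjoint (φ B) := by
    have := IsAdjointPair.map (algebraMap ℝ ℂ) hB
    rwa [map_neg] at this
  have hGC : IsUnit (φ G).det := by
    rw [← RingHom.map_det]
    exact hGinv.map _
  have hφB : φ B = 0 := hBC.eq_zero_of_commute hGC (IsAdjointPair.map _ hsa)
    (finrank_eigenspace_toLin'_le_one hreg) (Commute.map (Commute.symm hcomm) φ)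
  exact map_injective (algebraMap ℝ ℂ).injective (hφB.trans (map_zero φ).symm)

/-- uniqueness lemma, algebraic core: a G-skew-adjoint matrix
commuting with a regular G-selfadjoint matrix is zero. -/
theorem uniqueness_lemma_algebraic_core
    (n : ℕ) (G L B : Matrix (Fin n) (Fin n) ℝ)
    (hGsymm : G.IsSymm) (hGinv : IsUnit G.det)
    (hsa : Lᵀ * G = G * L)
    (hreg : ∀ μ : ℂ, μ ∈ spectrum ℂ (L.map (algebraMap ℝ ℂ)) →
      Module.finrank ℂ
        (LinearMap.ker (Matrix.mulVecLin (L.map (algebraMap ℝ ℂ) - μ • 1))) = 1)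
    (hcomm : B * L = L * B)
    (hskew : Bᵀ * G + G * B = 0) :
    B = 0 :=
  uniqueness_lemma_algebraic_core_general n G L B hGinv hsa hreg hcomm hskew
end

section
/- Trace lemma. Let V be a real vector space of finite dimension n, let g be a nondegenerate symmetric bilinear form on V, and let N : V → V be a g-selfadjoint endomorphism (g(Nv, w) = g(v, Nw) for all v, w) with tr N = 0. Let u ∈ V and α ∈ V*. If there exists an endomorphism B : V → V such that B∘N − N∘B = (n/2)·( u⊗α + (u⊗α)^* ) − α(u)·id_V, where u⊗α denotes the endomorphism v ↦ α(v)·u and A^* denotes the g-adjoint of A (defined by g(A^* v, w) = g(v, A w)), then α(N u) = 0. -/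
/-!
Compose both sides of the commutator equation with `N` and take traces. On the left,
`tr ((B N - N B) N) = 0` by cyclicity of the trace. On the right, writing `α = g z` (possible
since `g` is nondegenerate), the adjoint of `u ⊗ α` is `v ↦ g v u • z`; both rank-one terms
contribute `α (N u)` (the second because `N` is selfadjoint), and the identity term contributes
`α u · tr N = 0`. Hence `n · α (N u) = 0`.
-/

namespace LinearMap

variable {R M : Type*} [CommRing R] [AddCommGroup M] [Module R M]
  [Module.Free R M] [Module.Finite R M]

theorem trace_commutator_comp_self (B N : M →ₗ[R] M) :
    trace R M ((B ∘ₗ N - N ∘ₗ B) ∘ₗ N) = 0 := by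
  rw [sub_comp, map_sub, trace_comp_comm' N (B ∘ₗ N), comp_assoc, sub_self]

theorem trace_smulRight_comp (φ : M →ₗ[R] R) (x : M) (N : M →ₗ[R] M) :
    trace R M (φ.smulRight x ∘ₗ N) = φ (N x) := by
  rw [trace_comp_comm', show N ∘ₗ φ.smulRight x = φ.smulRight (N x) by ext; simp,
    trace_smulRight]

end LinearMap

theorem trace_lemma_general
    (V : Type*) [AddCommGroup V] [Module ℝ V] [FiniteDimensional ℝ V]
    (g : V →ₗ[ℝ] V →ₗ[ℝ] ℝ)
    (hnd : ∀ v : V, (∀ w : V, g v w = 0) → v = 0)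
    (N : V →ₗ[ℝ] V)
    (hsa : ∀ v w : V, g (N v) w = g v (N w))
    (htr : LinearMap.trace ℝ V N = 0)
    (u : V) (α : V →ₗ[ℝ] ℝ) (B : V →ₗ[ℝ] V)
    (hB : ∀ v w : V, g ((B ∘ₗ N - N ∘ₗ B) v) w =
      ((Module.finrank ℝ V : ℝ) / 2) * (α v * g u w + α w * g v u) - α u * g v w) :
    α (N u) = 0 := by
  set n : ℝ := (Module.finrank ℝ V : ℝ)
  obtain ⟨z, hz⟩ : ∃ z : V, ∀ w, g z w = α w :=
    ⟨(LinearMap.BilinForm.toDual g (.ofSeparatingLeft hnd)).symm α,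
      LinearMap.BilinForm.apply_toDual_symm_apply α⟩
  have hcomm : B ∘ₗ N - N ∘ₗ B =
      (n / 2) • (α.smulRight u + (g.flip u).smulRight z) - α u • LinearMap.id := by
    refine LinearMap.ext fun v => sub_eq_zero.mp <| hnd _ fun w => ?_
    rw [map_sub, LinearMap.sub_apply, hB]
    simp only [LinearMap.sub_apply, LinearMap.add_apply, LinearMap.smul_apply,
      LinearMap.smulRight_apply, LinearMap.flip_apply, LinearMap.id_apply, map_sub, map_add,
      map_smul, smul_eq_mul, hz]
    ring
  have htrace : n * α (N u) = 0 := by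
    have h := LinearMap.trace_commutator_comp_self B N
    simp only [hcomm, LinearMap.sub_comp, LinearMap.smul_comp, LinearMap.add_comp,
      LinearMap.id_comp, map_sub, map_smul, map_add, LinearMap.trace_smulRight_comp,
      LinearMap.flip_apply, hsa, hz, htr, smul_eq_mul] at h
    linear_combination h
  rcases mul_eq_zero.mp htrace with hn | h
  · have : Subsingleton V := Module.finrank_zero_iff.mp (Nat.cast_eq_zero.mp hn)
    rw [Subsingleton.elim (N u) 0, map_zero]
  · exact h

/-- trace lemma.  If `N` is `g`-selfadjoint and traceless and
`B∘N − N∘B = (n/2)(u⊗α + (u⊗α)^*) − α(u)·id` for some endomorphism `B`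
(the equation is expressed by pairing both sides with `g`), then `α(Nu) = 0`. -/
theorem trace_lemma
    (V : Type*) [AddCommGroup V] [Module ℝ V] [FiniteDimensional ℝ V]
    (g : V →ₗ[ℝ] V →ₗ[ℝ] ℝ)
    (hsymm : ∀ v w : V, g v w = g w v)
    (hnd : ∀ v : V, (∀ w : V, g v w = 0) → v = 0)
    (N : V →ₗ[ℝ] V)
    (hsa : ∀ v w : V, g (N v) w = g v (N w))
    (htr : LinearMap.trace ℝ V N = 0)
    (u : V) (α : V →ₗ[ℝ] ℝ) (B : V →ₗ[ℝ] V)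
    (hB : ∀ v w : V, g ((B ∘ₗ N - N ∘ₗ B) v) w =
      ((Module.finrank ℝ V : ℝ) / 2) * (α v * g u w + α w * g v u) - α u * g v w) :
    α (N u) = 0 :=
  trace_lemma_general V g hnd N hsa htr u α B hB
end

section
/- Derivatives of the eigenvalue along a canonical frame for a real Jordan block. Let U ⊆ ℝ^n be open, let e_1, …, e_n : U → ℝ^n be smooth vector fields that are linearly independent at every point, let ε ∈ {+1, −1}, and let λ : U → ℝ be smooth with λ(x) ≠ 0 for all x. Define g : U → Mat_n(ℝ) as the unique map with g(x) symmetric and e_i(x)ᵀ g(x) e_j(x) = ε if i + j = n + 1 and = 0 otherwise, and define L : U → Mat_n(ℝ) as the unique map with L(x) e_j(x) = λ(x) e_j(x) + e_{j−1}(x) for all j (with the convention e_0 := 0). If L is compatible with g on U, then the directional derivatives e_i(λ) := Dλ·e_i vanish identically on U for i = 1, …, n−1. -/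
open Matrix Polynomial

noncomputable def pd {ι : Type*} [Fintype ι] [DecidableEq ι] (i : ι)
    (f : (ι → ℝ) → ℝ) (x : ι → ℝ) : ℝ :=
  fderiv ℝ f x (Pi.single i 1)

noncomputable def christoffel {ι : Type*} [Fintype ι] [DecidableEq ι]
    (g : (ι → ℝ) → Matrix ι ι ℝ) (x : ι → ℝ) (l j k : ι) : ℝ :=
  (1/2) * ∑ m, (g x)⁻¹ l m *
    (pd j (fun y => g y m k) x + pd k (fun y => g y m j) x - pd m (fun y => g y j k) x)

def IsCompatiblePair {ι : Type*} [Fintype ι] [DecidableEq ι]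
    (U : Set (ι → ℝ)) (g L : (ι → ℝ) → Matrix ι ι ℝ) : Prop :=
  (∀ i j : ι, ContDiffOn ℝ (⊤ : ℕ∞) (fun y => g y i j) U) ∧
  (∀ i j : ι, ContDiffOn ℝ (⊤ : ℕ∞) (fun y => L y i j) U) ∧
  (∀ x ∈ U, (g x).IsSymm ∧ IsUnit (g x).det ∧ IsUnit (L x).det ∧ (g x * L x).IsSymm) ∧
  (∀ x ∈ U, ∀ i j k : ι,
    pd k (fun y => (g y * L y) i j) x
      - (∑ l, christoffel g x l k i * (g x * L x) l j)
      - (∑ l, christoffel g x l k j * (g x * L x) i l)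
    = pd i (fun y => (1/2) * (L y).trace) x * g x j k
      + pd j (fun y => (1/2) * (L y).trace) x * g x i k)

/-! Work at a point `x` with `v = E (n-1)` (frames indexed from `0`) and the
connection form `ω a b = g(∇_v E a, E b)` of the Levi-Civita connection `∇`. Since `∇` is metric
and `g(E a, E b)` is constant, `ω` is antisymmetric. Contract the compatibility equation with
`E a`, `E b` along `v`: for `a + b ≤ n - 2` the function `g(L E a, E b)` vanishes identically,
and `L E b = λ E b + E (b-1)`, `tr L = n λ`, `g(E b, v) = ε δ_{b0}` turn it into
`ω a (b-1) + ω b (a-1) + (n ε / 2) (δ_{b0} E a(λ) + δ_{a0} E b(λ)) = 0`.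
Summed over `a + b = i`, each family of `ω`-terms is `∑_{a+b=i-1} ω a b = 0`, leaving
`n ε E i(λ) = 0`. -/

open Finset

theorem Matrix.trace_eq_card_mul_of_mulVec_sub_smul_mem_span {K ι : Type*} [Field K] [Fintype ι]
    [DecidableEq ι] {A : Matrix ι ι K} {b : ι → ι → K} (hb : LinearIndependent K b) {μ : K}
    (h : ∀ j, A *ᵥ b j - μ • b j ∈ Submodule.span K (b '' {j}ᶜ)) :
    A.trace = Fintype.card ι * μ := by
  set B := basisOfLinearIndependentOfCardEqFinrank' b hb (by simp)
  have hB : ⇑B = b := coe_basisOfLinearIndependentOfCardEqFinrank' b hb _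
  have hdiag : ∀ j, B.repr (A *ᵥ b j) j = μ := fun j => by
    have hj : j ∉ (B.repr (A *ᵥ b j - μ • b j)).support := fun hmem =>
      B.repr_support_subset_of_mem_span {j}ᶜ (by rw [hB]; exact h j) hmem rfl
    rw [Finsupp.notMem_support_iff, map_sub, map_smul, ← hB, B.repr_self] at hj
    simpa [sub_eq_zero, hB] using hj
  rw [← Matrix.trace_toLin'_eq, LinearMap.trace_eq_matrix_trace K B, Matrix.trace]
  simp [LinearMap.toMatrix_apply, hB, hdiag]

theorem Matrix.trace_eq_mul_of_mulVec_eq_smul_add_pred {K : Type*} [Field K] {n : ℕ}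
    {A : Matrix (Fin n) (Fin n) K} {e : Fin n → Fin n → K} (he : LinearIndependent K e) {μ : K}
    (h : ∀ j : Fin n, A *ᵥ e j = μ • e j
      + if (j : ℕ) = 0 then 0 else e ⟨(j : ℕ) - 1, (Nat.sub_le _ _).trans_lt j.isLt⟩) :
    A.trace = n * μ := by
  refine (trace_eq_card_mul_of_mulVec_sub_smul_mem_span he (μ := μ) fun j => ?_).trans (by simp)
  rw [h j, add_sub_cancel_left]
  split_ifs with hj
  · exact zero_mem _
  · exact Submodule.subset_span ⟨_, fun h => hj (by simp [Fin.ext_iff] at h; omega), rfl⟩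

theorem Matrix.IsSymm.dotProduct_mulVec_comm {ι R : Type*} [Fintype ι] [CommSemiring R]
    {A : Matrix ι ι R} (hA : A.IsSymm) (v w : ι → R) : v ⬝ᵥ A *ᵥ w = w ⬝ᵥ A *ᵥ v := by
  rw [dotProduct_mulVec, ← mulVec_transpose, hA.eq, dotProduct_comm]

theorem sum_antidiagonal_eq_zero_of_antisymm {R : Type*} [NonAssocRing R] [NoZeroDivisors R]
    [CharZero R] {S : ℕ → ℕ → R} (hS : ∀ a b, S a b + S b a = 0) (m : ℕ) :
    ∑ p ∈ antidiagonal m, S p.1 p.2 = 0 := by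
  rw [← add_self_eq_zero]
  nth_rewrite 2 [← Finset.Nat.sum_antidiagonal_swap]
  rw [← Finset.sum_add_distrib]
  exact Finset.sum_eq_zero fun p _ => hS p.1 p.2

theorem mul_eq_zero_of_forall_antidiagonal {R : Type*} [CommRing R] [NoZeroDivisors R]
    [CharZero R] {S : ℕ → ℕ → R} {d : ℕ → R} {c : R} {i : ℕ} (hS : ∀ a b, S a b + S b a = 0)
    (h : ∀ a b, a + b = i →
      (if b = 0 then 0 else S a (b - 1)) + (if a = 0 then 0 else S b (a - 1))
        + c * ((if b = 0 then d a else 0) + (if a = 0 then d b else 0)) = 0) :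
    c * d i = 0 := by
  have hSsum : ∑ p ∈ antidiagonal i, (if p.2 = 0 then 0 else S p.1 (p.2 - 1)) = 0 := by
    cases i with
    | zero => simp
    | succ m =>
      simpa [Finset.Nat.sum_antidiagonal_succ'] using sum_antidiagonal_eq_zero_of_antisymm hS m
  have hSsum' : ∑ p ∈ antidiagonal i, (if p.1 = 0 then 0 else S p.2 (p.1 - 1)) = 0 :=
    Finset.Nat.sum_antidiagonal_swap.trans hSsum
  have hdsum : ∑ p ∈ antidiagonal i, (if p.2 = 0 then d p.1 else 0) = d i := by
    rw [Finset.sum_eq_single (i, 0)] <;> aesop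
  have hdsum' : ∑ p ∈ antidiagonal i, (if p.1 = 0 then d p.2 else 0) = d i :=
    Finset.Nat.sum_antidiagonal_swap.trans hdsum
  have hsum := Finset.sum_eq_zero fun p hp => h p.1 p.2 (HasAntidiagonal.mem_antidiagonal.1 hp)
  rw [sum_add_distrib, sum_add_distrib, ← mul_sum, sum_add_distrib, hSsum, hSsum', hdsum,
    hdsum', zero_add, zero_add, ← two_mul, mul_left_comm] at hsum
  exact (mul_eq_zero.1 hsum).resolve_left two_ne_zero

section Calculus

variable {ι : Type*} [Fintype ι]

theorem fderiv_apply_eq_fderiv_component {X : (ι → ℝ) → ι → ℝ} {x : ι → ℝ}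
    (hX : DifferentiableAt ℝ X x) (v : ι → ℝ) (i : ι) :
    fderiv ℝ X x v i = fderiv ℝ (fun y => X y i) x v := by
  rw [fderiv_apply hX]; rfl

theorem fderiv_dotProduct_apply {X Z : (ι → ℝ) → ι → ℝ} {x : ι → ℝ}
    (hX : DifferentiableAt ℝ X x) (hZ : DifferentiableAt ℝ Z x) (v : ι → ℝ) :
    fderiv ℝ (fun y => X y ⬝ᵥ Z y) x v = fderiv ℝ X x v ⬝ᵥ Z x + X x ⬝ᵥ fderiv ℝ Z x v := by
  have hXi := differentiableAt_pi.1 hX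
  have hZi := differentiableAt_pi.1 hZ
  simp only [dotProduct]
  rw [fderiv_fun_sum (A := fun i y => X y i * Z y i) (fun i _ => (hXi i).mul (hZi i))]
  simp only [FunLike.coe_sum, Finset.sum_apply, fderiv_apply_eq_fderiv_component hX,
    fderiv_apply_eq_fderiv_component hZ, ← Finset.sum_add_distrib]
  refine Finset.sum_congr rfl fun i _ => ?_
  simp [fderiv_fun_mul (hXi i) (hZi i), mul_comm, add_comm]

noncomputable def matrixFDeriv (A : (ι → ℝ) → Matrix ι ι ℝ) (x v : ι → ℝ) : Matrix ι ι ℝ :=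
  of fun i j => fderiv ℝ (fun y => A y i j) x v

theorem differentiableAt_mulVec {A : (ι → ℝ) → Matrix ι ι ℝ} {Y : (ι → ℝ) → ι → ℝ} {x : ι → ℝ}
    (hA : ∀ i j, DifferentiableAt ℝ (fun y => A y i j) x) (hY : DifferentiableAt ℝ Y x) :
    DifferentiableAt ℝ (fun y => A y *ᵥ Y y) x :=
  differentiableAt_pi.2 fun i =>
    DifferentiableAt.fun_sum fun j _ => (hA i j).mul (differentiableAt_pi.1 hY j)

theorem fderiv_mulVec_apply {A : (ι → ℝ) → Matrix ι ι ℝ} {Y : (ι → ℝ) → ι → ℝ} {x : ι → ℝ}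
    (hA : ∀ i j, DifferentiableAt ℝ (fun y => A y i j) x) (hY : DifferentiableAt ℝ Y x)
    (v : ι → ℝ) :
    fderiv ℝ (fun y => A y *ᵥ Y y) x v = matrixFDeriv A x v *ᵥ Y x + A x *ᵥ fderiv ℝ Y x v := by
  ext i
  rw [fderiv_apply_eq_fderiv_component (differentiableAt_mulVec hA hY)]
  have hAi : fderiv ℝ (fun y => A y i) x v = matrixFDeriv A x v i := by
    ext j
    exact fderiv_apply_eq_fderiv_component (differentiableAt_pi.2 (hA i)) v j
  simpa [mulVec, hAi] using fderiv_dotProduct_apply (differentiableAt_pi.2 (hA i)) hY v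

theorem fderiv_dotProduct_mulVec_apply {A : (ι → ℝ) → Matrix ι ι ℝ} {X Y : (ι → ℝ) → ι → ℝ}
    {x : ι → ℝ} (hA : ∀ i j, DifferentiableAt ℝ (fun y => A y i j) x)
    (hX : DifferentiableAt ℝ X x) (hY : DifferentiableAt ℝ Y x) (v : ι → ℝ) :
    fderiv ℝ (fun y => X y ⬝ᵥ A y *ᵥ Y y) x v = fderiv ℝ X x v ⬝ᵥ A x *ᵥ Y x
      + X x ⬝ᵥ matrixFDeriv A x v *ᵥ Y x + X x ⬝ᵥ A x *ᵥ fderiv ℝ Y x v := by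
  rw [fderiv_dotProduct_apply hX (differentiableAt_mulVec hA hY), fderiv_mulVec_apply hA hY,
    dotProduct_add, add_assoc]

variable [DecidableEq ι]

theorem sum_mul_pd_eq_fderiv (f : (ι → ℝ) → ℝ) (x v : ι → ℝ) :
    ∑ k, v k * pd k f x = fderiv ℝ f x v := by
  conv_rhs => rw [← Finset.univ_sum_single v, map_sum]
  refine Finset.sum_congr rfl fun k _ => ?_
  rw [pd, ← smul_eq_mul, ← map_smul, ← Pi.single_smul', smul_eq_mul, mul_one]

noncomputable def connectionMatrix (g : (ι → ℝ) → Matrix ι ι ℝ) (x v : ι → ℝ) : Matrix ι ι ℝ :=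
  of fun l i => ∑ k, christoffel g x l k i * v k

noncomputable def covDerivVec (g : (ι → ℝ) → Matrix ι ι ℝ) (X : (ι → ℝ) → ι → ℝ)
    (x v : ι → ℝ) : ι → ℝ :=
  fderiv ℝ X x v + connectionMatrix g x v *ᵥ X x

noncomputable def covDerivMatrix (g A : (ι → ℝ) → Matrix ι ι ℝ) (x v : ι → ℝ) :
    Matrix ι ι ℝ :=
  matrixFDeriv A x v - (connectionMatrix g x v)ᵀ * A x - A x * connectionMatrix g x v

theorem covDerivMatrix_apply (g A : (ι → ℝ) → Matrix ι ι ℝ) (x v : ι → ℝ) (i j : ι) :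
    covDerivMatrix g A x v i j = ∑ k, v k * (pd k (fun y => A y i j) x
      - ∑ l, christoffel g x l k i * A x l j - ∑ l, christoffel g x l k j * A x i l) := by
  simp only [covDerivMatrix, matrixFDeriv, connectionMatrix, Matrix.sub_apply, mul_apply,
    of_apply, transpose_apply, ← sum_mul_pd_eq_fderiv, mul_sub, sum_sub_distrib, sum_mul, mul_sum]
  congr 1; congr 1
  all_goals rw [sum_comm]; exact sum_congr rfl fun _ _ => sum_congr rfl fun _ _ => by ring

theorem fderiv_dotProduct_mulVec_eq_covDeriv {g A : (ι → ℝ) → Matrix ι ι ℝ}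
    {X Y : (ι → ℝ) → ι → ℝ} {x : ι → ℝ} (hA : ∀ i j, DifferentiableAt ℝ (fun y => A y i j) x)
    (hX : DifferentiableAt ℝ X x) (hY : DifferentiableAt ℝ Y x) (v : ι → ℝ) :
    fderiv ℝ (fun y => X y ⬝ᵥ A y *ᵥ Y y) x v = covDerivVec g X x v ⬝ᵥ A x *ᵥ Y x
      + X x ⬝ᵥ covDerivMatrix g A x v *ᵥ Y x + X x ⬝ᵥ A x *ᵥ covDerivVec g Y x v := by
  rw [fderiv_dotProduct_mulVec_apply hA hX hY]
  simp only [covDerivVec, covDerivMatrix, add_dotProduct, dotProduct_add, sub_mulVec, mulVec_add,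
    dotProduct_sub, ← mulVec_mulVec, dotProduct_mulVec _ (connectionMatrix g x v)ᵀ,
    vecMul_transpose]
  ring

theorem sum_christoffel_mul {g : (ι → ℝ) → Matrix ι ι ℝ} {x : ι → ℝ} (hsymm : (g x).IsSymm)
    (hdet : IsUnit (g x).det) (k i j : ι) :
    ∑ l, christoffel g x l k i * g x l j = (1 / 2) * (pd k (fun y => g y j i) x
      + pd i (fun y => g y j k) x - pd j (fun y => g y k i) x) := by
  have hinv : ∀ m, ∑ l, (g x)⁻¹ l m * g x l j = (1 : Matrix ι ι ℝ) m j := fun m => by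
    rw [← nonsing_inv_mul _ hdet, mul_apply]
    exact sum_congr rfl fun l _ => by rw [hsymm.inv.apply l m]
  calc ∑ l, christoffel g x l k i * g x l j
      = (1 / 2) * ∑ m, (∑ l, (g x)⁻¹ l m * g x l j) * (pd k (fun y => g y m i) x
          + pd i (fun y => g y m k) x - pd m (fun y => g y k i) x) := by
        simp only [christoffel, mul_sum, sum_mul]
        rw [sum_comm]
        exact sum_congr rfl fun _ _ => sum_congr rfl fun _ _ => by ring
    _ = _ := by simp [hinv, one_apply]

theorem covDerivMatrix_self_eq_zero {g : (ι → ℝ) → Matrix ι ι ℝ} {x : ι → ℝ}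
    (hsymm : ∀ᶠ y in nhds x, (g y).IsSymm) (hdet : IsUnit (g x).det) (v : ι → ℝ) :
    covDerivMatrix g g x v = 0 := by
  have hpd : ∀ k i j, pd k (fun y => g y i j) x = pd k (fun y => g y j i) x := fun k i j => by
    unfold pd
    rw [Filter.EventuallyEq.fderiv_eq (hsymm.mono fun y hy => hy.apply i j)]
  ext i j
  rw [covDerivMatrix_apply, Matrix.zero_apply]
  refine sum_eq_zero fun k _ => ?_
  have hswap : ∑ l, christoffel g x l k j * g x i l = ∑ l, christoffel g x l k j * g x l i :=
    sum_congr rfl fun l _ => by rw [hsymm.self_of_nhds.apply i l]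
  rw [hswap, sum_christoffel_mul hsymm.self_of_nhds hdet,
    sum_christoffel_mul hsymm.self_of_nhds hdet,
    hpd k j i, hpd i j k, hpd j i k, hpd j k i]
  ring

namespace IsCompatiblePair

variable {U : Set (ι → ℝ)} {g L : (ι → ℝ) → Matrix ι ι ℝ} {x : ι → ℝ}

theorem differentiableAt_metric (h : IsCompatiblePair U g L) (hU : IsOpen U) (hx : x ∈ U)
    (i j : ι) : DifferentiableAt ℝ (fun y => g y i j) x :=
  ((h.1 i j).contDiffAt (hU.mem_nhds hx)).differentiableAt (by simp)

theorem differentiableAt_mul (h : IsCompatiblePair U g L) (hU : IsOpen U) (hx : x ∈ U)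
    (i j : ι) : DifferentiableAt ℝ (fun y => (g y * L y) i j) x :=
  DifferentiableAt.fun_sum fun k _ => (h.differentiableAt_metric hU hx i k).mul
    (((h.2.1 k j).contDiffAt (hU.mem_nhds hx)).differentiableAt (by simp))

theorem covDerivMatrix_mul_eq (h : IsCompatiblePair U g L) (hx : x ∈ U) (v : ι → ℝ) :
    covDerivMatrix g (fun y => g y * L y) x v
      = vecMulVec (fun i => pd i (fun y => (1/2) * (L y).trace) x) (g x *ᵥ v)
        + vecMulVec (g x *ᵥ v) (fun i => pd i (fun y => (1/2) * (L y).trace) x) := by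
  ext i j
  simp only [covDerivMatrix_apply, h.2.2.2 x hx, Matrix.add_apply, vecMulVec_apply, mulVec,
    dotProduct, mul_add, sum_add_distrib, mul_sum, sum_mul]
  congr 1 <;> exact sum_congr rfl fun _ _ => by ring

theorem fderiv_dotProduct_mul_mulVec (h : IsCompatiblePair U g L) (hU : IsOpen U) (hx : x ∈ U)
    {X Y : (ι → ℝ) → ι → ℝ} (hX : DifferentiableAt ℝ X x) (hY : DifferentiableAt ℝ Y x)
    (v : ι → ℝ) :
    fderiv ℝ (fun y => X y ⬝ᵥ (g y * L y) *ᵥ Y y) x v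
      = covDerivVec g X x v ⬝ᵥ (g x * L x) *ᵥ Y x + X x ⬝ᵥ (g x * L x) *ᵥ covDerivVec g Y x v
        + fderiv ℝ (fun y => (1/2) * (L y).trace) x (X x) * (Y x ⬝ᵥ g x *ᵥ v)
        + (X x ⬝ᵥ g x *ᵥ v) * fderiv ℝ (fun y => (1/2) * (L y).trace) x (Y x) := by
  rw [fderiv_dotProduct_mulVec_eq_covDeriv (h.differentiableAt_mul hU hx) hX hY,
    h.covDerivMatrix_mul_eq hx, add_mulVec, vecMulVec_mulVec, vecMulVec_mulVec]
  have hφ : ∀ w, w ⬝ᵥ (fun i => pd i (fun y => (1/2) * (L y).trace) x)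
      = fderiv ℝ (fun y => (1/2) * (L y).trace) x w := fun w => sum_mul_pd_eq_fderiv _ x w
  simp only [dotProduct_add, dotProduct_smul, MulOpposite.smul_eq_mul_unop, MulOpposite.unop_op,
    hφ, dotProduct_comm _ (Y x)]
  ring

end IsCompatiblePair

end Calculus

noncomputable def connectionForm {n : ℕ} (g : (Fin n → ℝ) → Matrix (Fin n) (Fin n) ℝ)
    (E : ℕ → (Fin n → ℝ) → Fin n → ℝ) (x v : Fin n → ℝ) (a b : ℕ) : ℝ :=
  covDerivVec g (E a) x v ⬝ᵥ g x *ᵥ E b x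

/-- `E k` is the paper's `e_(k+1)`: indexing by `ℕ` lets `E (b - 1)`, guarded by `b = 0`, express
the convention `e_0 = 0`. -/
structure IsCanonicalFrame {n : ℕ} (U : Set (Fin n → ℝ))
    (g L : (Fin n → ℝ) → Matrix (Fin n) (Fin n) ℝ) (ε : ℝ) (lam : (Fin n → ℝ) → ℝ)
    (E : ℕ → (Fin n → ℝ) → Fin n → ℝ) : Prop where
  differentiableAt : ∀ a, ∀ y ∈ U, DifferentiableAt ℝ (E a) y
  dotProduct_mulVec : ∀ y ∈ U, ∀ a b, E a y ⬝ᵥ g y *ᵥ E b y = if a + b + 1 = n then ε else 0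
  mulVec : ∀ y ∈ U, ∀ b < n, L y *ᵥ E b y = lam y • E b y + if b = 0 then 0 else E (b - 1) y

namespace IsCanonicalFrame

variable {n : ℕ} {U : Set (Fin n → ℝ)} {g L : (Fin n → ℝ) → Matrix (Fin n) (Fin n) ℝ} {ε : ℝ}
  {lam : (Fin n → ℝ) → ℝ} {E : ℕ → (Fin n → ℝ) → Fin n → ℝ}

theorem dotProduct_mul_mulVec (hE : IsCanonicalFrame U g L ε lam E) {y : Fin n → ℝ} (hy : y ∈ U)
    {b : ℕ} (hb : b < n) (w : Fin n → ℝ) :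
    w ⬝ᵥ (g y * L y) *ᵥ E b y
      = lam y * (w ⬝ᵥ g y *ᵥ E b y) + if b = 0 then 0 else w ⬝ᵥ g y *ᵥ E (b - 1) y := by
  rw [← mulVec_mulVec, hE.mulVec y hy b hb, mulVec_add, mulVec_smul, dotProduct_add,
    dotProduct_smul, smul_eq_mul]
  split_ifs <;> simp

theorem dotProduct_mul_mulVec_eq_zero (hE : IsCanonicalFrame U g L ε lam E) {y : Fin n → ℝ}
    (hy : y ∈ U) {a b : ℕ} (hab : a + b + 2 ≤ n) : E a y ⬝ᵥ (g y * L y) *ᵥ E b y = 0 := by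
  rw [hE.dotProduct_mul_mulVec hy (by omega), hE.dotProduct_mulVec y hy,
    if_neg (by omega), mul_zero, zero_add]
  split_ifs with hb
  · rfl
  · rw [hE.dotProduct_mulVec y hy, if_neg (by omega)]

theorem connectionForm_add_swap (hE : IsCanonicalFrame U g L ε lam E)
    (h : IsCompatiblePair U g L) (hU : IsOpen U) {x : Fin n → ℝ} (hx : x ∈ U) (v : Fin n → ℝ)
    (a b : ℕ) : connectionForm g E x v a b + connectionForm g E x v b a = 0 := by
  have hsymm : ∀ᶠ y in nhds x, (g y).IsSymm :=
    Filter.eventually_of_mem (hU.mem_nhds hx) fun y hy => (h.2.2.1 y hy).1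
  have hconst : (fun y => E a y ⬝ᵥ g y *ᵥ E b y) =ᶠ[nhds x]
      fun _ => if a + b + 1 = n then ε else 0 :=
    Filter.eventually_of_mem (hU.mem_nhds hx) fun y hy => hE.dotProduct_mulVec y hy a b
  have hLeibniz := fderiv_dotProduct_mulVec_eq_covDeriv (g := g) (h.differentiableAt_metric hU hx)
    (hE.differentiableAt a x hx) (hE.differentiableAt b x hx) v
  rw [hconst.fderiv_eq, fderiv_const_apply, covDerivMatrix_self_eq_zero hsymm (h.2.2.1 x hx).2.1,
    zero_mulVec, dotProduct_zero, add_zero, hsymm.self_of_nhds.dotProduct_mulVec_comm (E a x)]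
    at hLeibniz
  exact hLeibniz.symm

theorem connectionForm_pred_add_eq_zero (hE : IsCanonicalFrame U g L ε lam E)
    (h : IsCompatiblePair U g L) (hU : IsOpen U) (htr : ∀ y ∈ U, (L y).trace = n * lam y)
    {x : Fin n → ℝ} (hx : x ∈ U) {a b : ℕ} (hab : a + b + 2 ≤ n) :
    let S := connectionForm g E x (E (n - 1) x)
    let d := fun k => fderiv ℝ lam x (E k x)
    (if b = 0 then 0 else S a (b - 1)) + (if a = 0 then 0 else S b (a - 1))
      + n * ε / 2 * ((if b = 0 then d a else 0) + (if a = 0 then d b else 0)) = 0 := by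
  intro S d
  have hzero : (fun y => E a y ⬝ᵥ (g y * L y) *ᵥ E b y) =ᶠ[nhds x] fun _ => 0 :=
    Filter.eventually_of_mem (hU.mem_nhds hx) fun y hy => hE.dotProduct_mul_mulVec_eq_zero hy hab
  have htrace : ∀ w, fderiv ℝ (fun y => (1/2) * (L y).trace) x w = n / 2 * fderiv ℝ lam x w := by
    have hφ : (fun y => (1/2) * (L y).trace) =ᶠ[nhds x] (n / 2 : ℝ) • lam :=
      Filter.eventually_of_mem (hU.mem_nhds hx) fun y hy => by
        simp only [htr y hy, Pi.smul_apply, smul_eq_mul]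
        ring
    intro w
    rw [hφ.fderiv_eq, fderiv_const_smul_field]
    rfl
  have hv : ∀ k, E k x ⬝ᵥ g x *ᵥ E (n - 1) x = if k = 0 then ε else 0 := fun k => by
    rw [hE.dotProduct_mulVec x hx]
    exact if_congr (by omega) rfl rfl
  have hkey := h.fderiv_dotProduct_mul_mulVec hU hx (hE.differentiableAt a x hx)
    (hE.differentiableAt b x hx) (E (n - 1) x)
  rw [hzero.fderiv_eq, fderiv_const_apply, _root_.zero_apply,
    (h.2.2.1 x hx).2.2.2.dotProduct_mulVec_comm (E a x), hE.dotProduct_mul_mulVec hx (by omega),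
    hE.dotProduct_mul_mulVec hx (by omega), htrace, htrace, hv, hv] at hkey
  have hanti := hE.connectionForm_add_swap h hU hx (E (n - 1) x) a b
  simp only [connectionForm] at hanti
  simp only [S, d, connectionForm]
  split_ifs at hkey ⊢ <;> linear_combination (-1) * hkey - lam x * hanti

end IsCanonicalFrame

def extendByZero {n : ℕ} {β : Type*} [Zero β] (e : Fin n → β) (k : ℕ) : β :=
  if h : k < n then e ⟨k, h⟩ else 0

theorem extendByZero_of_lt {n : ℕ} {β : Type*} [Zero β] (e : Fin n → β) {k : ℕ} (h : k < n) :
    extendByZero e k = e ⟨k, h⟩ :=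
  dif_pos h

theorem isCanonicalFrame_extendByZero {n : ℕ} {U : Set (Fin n → ℝ)} (hU : IsOpen U)
    {e : Fin n → (Fin n → ℝ) → (Fin n → ℝ)} {g L : (Fin n → ℝ) → Matrix (Fin n) (Fin n) ℝ}
    {ε : ℝ} {lam : (Fin n → ℝ) → ℝ}
    (he : ∀ i : Fin n, ∀ c : Fin n, ContDiffOn ℝ (⊤ : ℕ∞) (fun y => e i y c) U)
    (hg : ∀ x ∈ U, ∀ i j : Fin n,
      e i x ⬝ᵥ (g x).mulVec (e j x) = if (i : ℕ) + (j : ℕ) + 1 = n then ε else 0)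
    (hL : ∀ x ∈ U, ∀ j : Fin n, (L x).mulVec (e j x) = lam x • e j x
      + if (j : ℕ) = 0 then 0 else e ⟨(j : ℕ) - 1, (Nat.sub_le _ _).trans_lt j.isLt⟩ x) :
    IsCanonicalFrame U g L ε lam (extendByZero e) where
  differentiableAt a y hy := by
    unfold extendByZero
    split_ifs with ha
    · exact ((contDiffOn_pi.2 (he ⟨a, ha⟩)).contDiffAt (hU.mem_nhds hy)).differentiableAt (by simp)
    · exact differentiableAt_const 0
  dotProduct_mulVec y hy a b := by
    by_cases hab : a < n ∧ b < n
    · rw [extendByZero_of_lt e hab.1, extendByZero_of_lt e hab.2]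
      exact hg y hy _ _
    · rw [if_neg (by omega)]
      unfold extendByZero
      split_ifs <;> simp_all
  mulVec y hy b hb := by
    rw [extendByZero_of_lt e hb, hL y hy ⟨b, hb⟩]
    split_ifs with hb0
    · rfl
    · rw [extendByZero_of_lt e (by omega)]

/-- derivatives of the eigenvalue along a canonical frame for a
real Jordan block vanish in the directions e_1, …, e_{n-1}. -/
theorem eigenvalue_derivatives_along_canonical_frame
    (n : ℕ) (U : Set (Fin n → ℝ)) (hU : IsOpen U)
    (e : Fin n → (Fin n → ℝ) → (Fin n → ℝ))
    (he : ∀ i : Fin n, ∀ c : Fin n, ContDiffOn ℝ (⊤ : ℕ∞) (fun y => e i y c) U)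
    (hli : ∀ x ∈ U, LinearIndependent ℝ (fun i : Fin n => e i x))
    (ε : ℝ) (hε : ε = 1 ∨ ε = -1)
    (lam : (Fin n → ℝ) → ℝ)
    (g L : (Fin n → ℝ) → Matrix (Fin n) (Fin n) ℝ)
    (hg : ∀ x ∈ U, (g x).IsSymm ∧ ∀ i j : Fin n,
      e i x ⬝ᵥ (g x).mulVec (e j x) = if (i : ℕ) + (j : ℕ) + 1 = n then ε else 0)
    (hL : ∀ x ∈ U, ∀ j : Fin n, (L x).mulVec (e j x) =
      lam x • e j x +
        (if h : (j : ℕ) = 0 then 0 else e ⟨(j : ℕ) - 1, by omega⟩ x))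
    (hcomp : IsCompatiblePair U g L) :
    ∀ x ∈ U, ∀ i : Fin n, (i : ℕ) + 2 ≤ n → fderiv ℝ lam x (e i x) = 0 := by
  intro x hx i hi
  have hframe := isCanonicalFrame_extendByZero hU he (fun y hy => (hg y hy).2) hL
  have htr : ∀ y ∈ U, (L y).trace = n * lam y := fun y hy =>
    Matrix.trace_eq_mul_of_mulVec_eq_smul_add_pred (hli y hy) (hL y hy)
  have hmul := mul_eq_zero_of_forall_antidiagonal (i := i)
    (hframe.connectionForm_add_swap hcomp hU hx _) fun a b hab =>
      hframe.connectionForm_pred_add_eq_zero hcomp hU htr hx (show a + b + 2 ≤ n by omega)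
  rw [extendByZero_of_lt e i.isLt] at hmul
  have hε0 : (n : ℝ) * ε / 2 ≠ 0 := by
    have : (n : ℝ) ≠ 0 := by exact_mod_cast (show n ≠ 0 by omega)
    rcases hε with rfl | rfl <;> simpa
  exact (mul_eq_zero.1 hmul).resolve_left hε0
end

section
/- Rigidity of polynomials with holomorphic coefficients whose roots have maximal imaginary part. Let U ⊆ ℂ^k be an open connected set and let a_0, …, a_{k−1} : U → ℂ be holomorphic functions. For z ∈ U let P_z(t) = t^k + a_{k−1}(z) t^{k−1} + … + a_1(z) t + a_0(z). Suppose there exist z_0 ∈ U and μ_0 ∈ ℂ such that P_{z_0}(t) = (t − μ_0)^k, and for every z ∈ U every complex root λ of P_z satisfies Im λ ≤ Im μ_0. Then P_z(t) = (t − μ_0)^k for all z ∈ U; in particular all roots of P_z are constant and equal to μ_0. -/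
/-!
Shift the roots by `μ₀`: the polynomials `Q_z(t) = P_z(t + μ₀)` are monic of degree `k`, their
coefficients are holomorphic in `z`, their roots lie in the closed lower half-plane, and
`Q_{z₀} = t ^ k`. The sum of the roots of `Q_z` is holomorphic and its imaginary part attains its
maximum `0` at `z₀`, so it is constant; hence every root of `Q_z` is real. Then every coefficient
of `Q_z` is real, and a real-valued holomorphic function on a connected open set is constant.
Both steps are the maximum principle for the imaginary part of a holomorphic function, which
follows from the maximum modulus principle applied to `exp (-I * g)`.
-/

open Polynomial Complex Set Function

section MaxPrinciple

variable {E : Type*} [NormedAddCommGroup E] [NormedSpace ℂ E] {U : Set E} {g : E → ℂ} {c : E}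

theorem Complex.im_eqOn_of_isPreconnected_of_isMaxOn_im (hc : IsPreconnected U) (ho : IsOpen U)
    (hd : DifferentiableOn ℂ g U) (hcU : c ∈ U) (hm : IsMaxOn (im ∘ g) U c) :
    EqOn (im ∘ g) (const E (g c).im) U := by
  have hnorm : ∀ z, ‖cexp (-I * g z)‖ = Real.exp (g z).im := by simp [norm_exp]
  have hmax : IsMaxOn (norm ∘ fun z => cexp (-I * g z)) U c := fun z hz =>
    show ‖cexp (-I * g z)‖ ≤ ‖cexp (-I * g c)‖ by
      rw [hnorm, hnorm]; exact Real.exp_le_exp.2 (hm hz)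
  intro z hz
  have := norm_eqOn_of_isPreconnected_of_isMaxOn hc ho (hd.const_mul _).cexp hcU hmax hz
  simpa only [comp_apply, hnorm, const_apply, Real.exp_eq_exp] using this

/-- Once `im g` is constant, `im (-I * (g - g c) ^ 2) = -(re (g - g c)) ^ 2` also attains its
maximum at `c`, which forces `re g` to be constant. -/
theorem Complex.eqOn_of_isPreconnected_of_isMaxOn_im (hc : IsPreconnected U) (ho : IsOpen U)
    (hd : DifferentiableOn ℂ g U) (hcU : c ∈ U) (hm : IsMaxOn (im ∘ g) U c) :
    EqOn g (const E (g c)) U := by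
  have him := im_eqOn_of_isPreconnected_of_isMaxOn_im hc ho hd hcU hm
  set h : E → ℂ := fun z => -I * (g z - g c) ^ 2
  have hdh : DifferentiableOn ℂ h U := ((hd.sub_const (g c)).pow 2).const_mul (-I)
  have him_h : ∀ z ∈ U, (h z).im = -((g z).re - (g c).re) ^ 2 := fun z hz => by
    have : (g z).im = (g c).im := him hz
    simp [h, sq, this]
  have hre := im_eqOn_of_isPreconnected_of_isMaxOn_im hc ho hdh hcU fun z hz =>
    show (h z).im ≤ (h c).im by rw [him_h z hz, him_h c hcU]; nlinarith
  intro z hz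
  have hz' : (h z).im = (h c).im := hre hz
  rw [him_h z hz, him_h c hcU, sub_self] at hz'
  show g z = g c
  exact Complex.ext (by nlinarith) (him hz)

end MaxPrinciple

theorem Multiset.eq_zero_of_forall_nonpos_of_sum_eq_zero {α : Type*} [AddCommGroup α]
    [PartialOrder α] [IsOrderedAddMonoid α] {s : Multiset α} (h : ∀ x ∈ s, x ≤ 0)
    (hs : s.sum = 0) : ∀ x ∈ s, x = 0 := by
  have := all_zero_of_le_zero_le_of_sum_eq_zero (s := s.map (-·))
    (forall_mem_map_iff.2 fun x hx => neg_nonneg.2 (h x hx))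
    (by rw [sum_map_neg, map_id', hs, neg_zero])
  exact fun x hx => neg_eq_zero.1 (this _ (mem_map_of_mem _ hx))

theorem Complex.im_multiset_sum (s : Multiset ℂ) : s.sum.im = (s.map im).sum := by
  simpa using map_multiset_sum imAddGroupHom s

theorem Polynomial.im_coeff_eq_zero_of_forall_im_roots_eq_zero {p : ℂ[X]} (hp : p.Monic)
    (h : ∀ r ∈ p.roots, r.im = 0) (n : ℕ) : (p.coeff n).im = 0 := by
  have hprod := (IsAlgClosed.splits p).eq_prod_roots_of_monic hp
  have hconj : p.map (starRingEnd ℂ) = p := by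
    rw [hprod, Polynomial.map_multiset_prod, Multiset.map_map, ← hprod]
    conv_rhs => rw [hprod]
    congr 1
    refine Multiset.map_congr rfl fun r hr => ?_
    simp [conj_eq_iff_im.2 (h r hr)]
  rw [← conj_eq_iff_im, ← coeff_map, hconj]

section HolomorphicFamily

variable {E : Type*} [NormedAddCommGroup E] [NormedSpace ℂ E] {U : Set E} {c : E}

theorem differentiableOn_coeff_X_pow_add_sum_comp {k : ℕ} {a : Fin k → E → ℂ}
    (ha : ∀ j, DifferentiableOn ℂ (a j) U) (q : ℂ[X]) (n : ℕ) :
    DifferentiableOn ℂ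
      (fun z => ((X ^ k + ∑ j : Fin k, C (a j z) * X ^ (j : ℕ)).comp q).coeff n) U := by
  simp only [add_comp, sum_comp, mul_comp, C_comp, X_pow_comp, coeff_add, finsetSum_coeff,
    coeff_C_mul]
  exact (differentiableOn_const _).add (DifferentiableOn.fun_sum fun j _ => (ha j).mul_const _)

theorem eqOn_of_forall_im_roots_nonpos {Q : E → ℂ[X]} {d : ℕ}
    (hc : IsPreconnected U) (ho : IsOpen U) (hcU : c ∈ U)
    (hmonic : ∀ z, (Q z).Monic) (hdeg : ∀ z, (Q z).natDegree = d)
    (hcoeff : ∀ n, DifferentiableOn ℂ (fun z => (Q z).coeff n) U)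
    (hroots : ∀ z ∈ U, ∀ r ∈ (Q z).roots, r.im ≤ 0)
    (hrootsc : ∀ r ∈ (Q c).roots, r.im = 0) :
    EqOn Q (const E (Q c)) U := by
  have hsum : ∀ z, (Q z).roots.sum = -(Q z).nextCoeff := fun z => by
    rw [(IsAlgClosed.splits _).nextCoeff_eq_neg_sum_roots_of_monic (hmonic z), neg_neg]
  have hsum_diff : DifferentiableOn ℂ (fun z => (Q z).roots.sum) U := by
    simp only [hsum, nextCoeff, hdeg]
    split_ifs
    · exact differentiableOn_const _
    · exact (hcoeff _).neg
  have him_roots : ∀ z ∈ U, ∀ x ∈ (Q z).roots.map im, x ≤ 0 := fun z hz =>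
    Multiset.forall_mem_map_iff.2 (hroots z hz)
  have hsum_c : ((Q c).roots.sum).im = 0 := by
    rw [im_multiset_sum, Multiset.map_congr rfl hrootsc, Multiset.map_const',
      Multiset.sum_replicate, smul_zero]
  have hsum_im : ∀ z ∈ U, ((Q z).roots.sum).im ≤ ((Q c).roots.sum).im := fun z hz => by
    simpa [hsum_c, im_multiset_sum] using Multiset.sum_le_card_nsmul _ 0 (him_roots z hz)
  have hreal : ∀ z ∈ U, ∀ r ∈ (Q z).roots, r.im = 0 := fun z hz => by
    have h := congrArg im (eqOn_of_isPreconnected_of_isMaxOn_im hc ho hsum_diff hcU hsum_im hz)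
    rw [const_apply, hsum_c, im_multiset_sum] at h
    exact Multiset.forall_mem_map_iff.1
      (Multiset.eq_zero_of_forall_nonpos_of_sum_eq_zero (him_roots z hz) h)
  intro z hz
  ext n
  refine eqOn_of_isPreconnected_of_isMaxOn_im hc ho (hcoeff n) hcU (fun w hw => ?_) hz
  simp [im_coeff_eq_zero_of_forall_im_roots_eq_zero (hmonic _) (hreal _ hw),
    im_coeff_eq_zero_of_forall_im_roots_eq_zero (hmonic _) hrootsc]

end HolomorphicFamily

/-- rigidity of polynomials with holomorphic coefficients whose
roots have maximal imaginary part. -/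
theorem holomorphic_coefficients_rigidity
    (k : ℕ) (U : Set (Fin k → ℂ)) (hUopen : IsOpen U) (hUconn : IsConnected U)
    (a : Fin k → (Fin k → ℂ) → ℂ)
    (ha : ∀ j : Fin k, DifferentiableOn ℂ (a j) U)
    (P : (Fin k → ℂ) → Polynomial ℂ)
    (hP : ∀ z : Fin k → ℂ, P z = X ^ k + ∑ j : Fin k, C (a j z) * X ^ (j : ℕ))
    (μ0 : ℂ) (z0 : Fin k → ℂ) (hz0 : z0 ∈ U)
    (hinit : P z0 = (X - C μ0) ^ k)
    (hroots : ∀ z ∈ U, ∀ t : ℂ, (P z).IsRoot t → t.im ≤ μ0.im) :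
    ∀ z ∈ U, P z = (X - C μ0) ^ k := by
  set Q := fun z => (P z).comp (X + C μ0) with hQ
  have hPmonic : ∀ z, (P z).Monic := fun z => hP z ▸ monic_X_pow_add (degree_sum_fin_lt _)
  have hmonic : ∀ z, (Q z).Monic := fun z => (hPmonic z).comp_X_add_C μ0
  have hdeg : ∀ z, (Q z).natDegree = k := fun z => by
    rw [natDegree_comp, natDegree_X_add_C, mul_one, hP z,
      natDegree_add_eq_left_of_degree_lt (by simpa using degree_sum_fin_lt _), natDegree_X_pow]
  have hcoeff : ∀ n, DifferentiableOn ℂ (fun z => (Q z).coeff n) U := fun n => by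
    simpa only [hQ, hP] using differentiableOn_coeff_X_pow_add_sum_comp ha (X + C μ0) n
  have hQroots : ∀ z ∈ U, ∀ r ∈ (Q z).roots, r.im ≤ 0 := fun z hz r hr => by
    simpa using hroots z hz (r + μ0)
      (by simpa [hQ, eval_comp] using (mem_roots (hmonic z).ne_zero).1 hr)
  have hQz0 : Q z0 = X ^ k := by simp [hQ, hinit, sub_comp]
  have hconst := eqOn_of_forall_im_roots_nonpos hUconn.isPreconnected hUopen hz0 hmonic hdeg
    hcoeff hQroots (by simp [hQz0])
  intro z hz
  calc P z = (Q z).comp (X - C μ0) := by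
        show P z = ((P z).comp (X + C μ0)).comp (X - C μ0)
        rw [Polynomial.comp_assoc]; simp
    _ = (X - C μ0) ^ k := by rw [hconst hz]; simp [hQz0]
end

section
/- Canonical complex structure associated with an operator without real eigenvalues. Let V be a finite-dimensional real vector space and let L : V → V be a linear map with no real eigenvalues. Then there exists a unique linear map J : V → V such that: (i) J∘J = −id_V; (ii) J∘L = L∘J; and (iii) for every μ ∈ ℂ with Im μ > 0, the generalized eigenspace of the complexification L_ℂ : ℂ⊗V → ℂ⊗V for the eigenvalue μ (i.e. ker (L_ℂ − μ·id)^{dim V}) is contained in the eigenspace ker(J_ℂ − i·id) of the complexification J_ℂ of J. -/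
/-!
Every eigenvalue of `L_ℂ` is non-real. By the Chinese remainder theorem there is a polynomial
`q` with `q ≡ i` modulo `(X - μ)ⁿ` at the eigenvalues `μ` in the upper half-plane and `q ≡ -i`
at those in the lower one; averaging `q` with its conjugate makes it real, so `J := q(L)` is a
real operator commuting with `L`, and `J_ℂ` acts on each generalized eigenspace as `±i`, whence
`J² = -1`. Conversely, (iii) forces `J_ℂ = i` on the upper generalized eigenspaces; since `J` is
real, `J_ℂ` commutes with the complex conjugation of `ℂ ⊗ V`, which exchanges the generalized
eigenspaces of `μ` and `μ̄`, so `J_ℂ = -i` on the lower ones. These spaces span `ℂ ⊗ V`, so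
`J_ℂ`, and hence `J`, is determined.
-/

open TensorProduct Polynomial Module

theorem Polynomial.exists_forall_X_sub_C_pow_dvd_sub_C {K : Type*} [Field K]
    (s : Finset K) (n : ℕ) (c : K → K) : ∃ p : K[X], ∀ μ ∈ s, (X - C μ) ^ n ∣ p - C (c μ) := by
  have hcoprime : Pairwise fun μ ν : s ↦
      IsCoprime (Ideal.span {(X - C (μ : K)) ^ n}) (Ideal.span {(X - C (ν : K)) ^ n}) := by
    intro μ ν hμν
    rw [Ideal.isCoprime_span_singleton_iff]
    exact (isCoprime_X_sub_C_of_isUnit_sub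
      (sub_ne_zero.mpr fun h ↦ hμν (Subtype.ext h)).isUnit).pow
  obtain ⟨p, hp⟩ := Ideal.exists_forall_sub_mem_ideal hcoprime (fun μ ↦ C (c μ))
  exact ⟨p, fun μ hμ ↦ Ideal.mem_span_singleton.mp (hp ⟨μ, hμ⟩)⟩

namespace Module.End

variable {R M : Type*} [CommRing R] [AddCommGroup M] [Module R M]

theorem aeval_apply_of_mem_genEigenspace {f : End R M} {p : R[X]} {μ c : R} {k : ℕ}
    (hp : (X - C μ) ^ k ∣ p - C c) {v : M} (hv : v ∈ f.genEigenspace μ k) :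
    aeval f p v = c • v := by
  obtain ⟨d, hd⟩ := hp
  have hker : aeval f (p - C c) v = 0 := by
    rw [hd, mul_comm, map_mul, mul_apply, map_pow, map_sub, aeval_X, aeval_C,
      algebraMap_end_eq_smul_id, ← one_eq_id, mem_genEigenspace_nat.mp hv, map_zero]
  rwa [map_sub, LinearMap.sub_apply, aeval_C, algebraMap_end_apply, sub_eq_zero] at hker

theorem eq_zero_of_mem_genEigenspace_of_not_hasEigenvalue {f : End R M} {μ : R} {k : ℕ}
    (hμ : ¬ f.HasEigenvalue μ) {v : M} (hv : v ∈ f.genEigenspace μ k) : v = 0 := by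
  by_contra hv0
  exact hμ (hasEigenvalue_of_hasGenEigenvalue ((Submodule.ne_bot_iff _).mpr ⟨v, hv, hv0⟩))

theorem ext_of_forall_genEigenspace_finrank {K : Type*} [Field K] [IsAlgClosed K] [Module K M]
    [FiniteDimensional K M] {f g h : End K M}
    (H : ∀ μ, f.HasEigenvalue μ → ∀ v ∈ f.genEigenspace μ (finrank K M), g v = h v) : g = h := by
  rw [← sub_eq_zero, ← LinearMap.ker_eq_top, eq_top_iff, ← iSup_maxGenEigenspace_eq_top f,
    iSup_le_iff]
  intro μ v hv
  rw [maxGenEigenspace_eq_genEigenspace_finrank] at hv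
  rw [LinearMap.mem_ker, LinearMap.sub_apply, sub_eq_zero]
  by_cases hμ : f.HasEigenvalue μ
  · exact H μ hμ v hv
  · simp [eq_zero_of_mem_genEigenspace_of_not_hasEigenvalue hμ hv]

end Module.End

open Complex ComplexConjugate

theorem Polynomial.exists_real_forall_X_sub_C_pow_dvd_sub_C (s : Finset ℂ) (n : ℕ) (c : ℂ → ℂ)
    (hc : ∀ μ ∈ s, c (conj μ) = conj (c μ)) :
    ∃ r : ℝ[X], ∀ μ ∈ s, (X - C μ) ^ n ∣ r.map (algebraMap ℝ ℂ) - C (c μ) := by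
  classical
  obtain ⟨p, hp⟩ := exists_forall_X_sub_C_pow_dvd_sub_C (s ∪ s.image conj) n c
  set q : ℂ[X] := C 2⁻¹ * (p + p.map (starRingEnd ℂ)) with hq
  have hq_real : q ∈ lifts (algebraMap ℝ ℂ) := by
    refine (lifts_iff_coeff_lifts q).mpr fun k ↦ ⟨(p.coeff k).re, ?_⟩
    rw [hq, coeff_C_mul, coeff_add, coeff_map, add_conj, Complex.coe_algebraMap]
    push_cast
    ring
  obtain ⟨r, hr⟩ := (mem_lifts q).mp hq_real
  refine ⟨r, fun μ hμ ↦ ?_⟩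
  have hp_conj : (X - C μ) ^ n ∣ p.map (starRingEnd ℂ) - C (c μ) := by
    simpa [hc μ hμ] using map_dvd (starRingEnd ℂ)
      (hp (conj μ) (Finset.mem_union_right _ (Finset.mem_image_of_mem _ hμ)))
  have hsplit : q - C (c μ) = C 2⁻¹ * ((p - C (c μ)) + (p.map (starRingEnd ℂ) - C (c μ))) := by
    have h2 : (C 2⁻¹ * 2 : ℂ[X]) = 1 := by rw [← C_ofNat, ← C_mul]; norm_num
    linear_combination C (c μ) * h2
  rw [hr, hsplit]
  exact (dvd_add (hp μ (Finset.mem_union_left _ hμ)) hp_conj).mul_left _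

section Complexification

variable {V : Type*} [AddCommGroup V] [Module ℝ V]

noncomputable def conjTensor : ℂ ⊗[ℝ] V →ₗ[ℝ] ℂ ⊗[ℝ] V :=
  conjAe.toLinearMap.rTensor V

@[simp]
theorem conjTensor_tmul (c : ℂ) (x : V) : conjTensor (c ⊗ₜ[ℝ] x) = conj c ⊗ₜ[ℝ] x := rfl

@[simp]
theorem conjTensor_conjTensor (z : ℂ ⊗[ℝ] V) : conjTensor (conjTensor z) = z := by
  induction z with
  | zero => simp
  | tmul c x => simp
  | add a b ha hb => simp [ha, hb]

theorem conjTensor_smul (c : ℂ) (z : ℂ ⊗[ℝ] V) : conjTensor (c • z) = conj c • conjTensor z := by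
  induction z with
  | zero => simp
  | tmul d x => simp [smul_tmul']
  | add a b ha hb => simp [ha, hb]

theorem conjTensor_baseChange (f : V →ₗ[ℝ] V) (z : ℂ ⊗[ℝ] V) :
    conjTensor (f.baseChange ℂ z) = f.baseChange ℂ (conjTensor z) := by
  induction z with
  | zero => simp
  | tmul c x => simp
  | add a b ha hb => simp [ha, hb]

theorem conjTensor_mem_genEigenspace_baseChange {f : V →ₗ[ℝ] V} {μ : ℂ} {k : ℕ}
    {z : ℂ ⊗[ℝ] V} (hz : z ∈ End.genEigenspace (f.baseChange ℂ) μ k) :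
    conjTensor z ∈ End.genEigenspace (f.baseChange ℂ) (conj μ) k := by
  have hsemiconj : Function.Semiconj conjTensor (f.baseChange ℂ - μ • 1 : End ℂ (ℂ ⊗[ℝ] V))
      (f.baseChange ℂ - conj μ • 1 : End ℂ (ℂ ⊗[ℝ] V)) := fun w ↦ by
    simp [conjTensor_smul, conjTensor_baseChange]
  rw [End.mem_genEigenspace_nat, LinearMap.mem_ker, End.pow_apply] at hz ⊢
  rw [← hsemiconj.iterate_right, hz, map_zero]

theorem LinearMap.baseChange_aeval (f : V →ₗ[ℝ] V) (r : ℝ[X]) :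
    (aeval f r).baseChange ℂ = aeval (f.baseChange ℂ) (r.map (algebraMap ℝ ℂ)) := by
  rw [aeval_map_algebraMap]
  exact (aeval_algHom_apply (End.baseChangeHom ℝ ℂ V) f r).symm

theorem im_ne_zero_of_hasEigenvalue_baseChange {L : V →ₗ[ℝ] V}
    (hL : ∀ r : ℝ, LinearMap.ker (L - r • LinearMap.id) = ⊥) {μ : ℂ}
    (hμ : End.HasEigenvalue (L.baseChange ℂ) μ) : μ.im ≠ 0 := by
  intro him
  obtain ⟨r, rfl⟩ : ∃ r : ℝ, (r : ℂ) = μ := ⟨μ.re, Complex.ext rfl (by simp [him])⟩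
  obtain ⟨v, hv⟩ := hμ.exists_hasEigenvector
  have hinj : Function.Injective ((L - r • LinearMap.id).baseChange ℂ) := by
    rw [LinearMap.baseChange_eq_ltensor]
    exact Module.Flat.lTensor_preserves_injective_linearMap _ (LinearMap.ker_eq_bot.mp (hL r))
  refine hv.2 (hinj ?_)
  rw [map_zero, LinearMap.baseChange_sub, LinearMap.baseChange_smul, LinearMap.baseChange_id,
    LinearMap.sub_apply, LinearMap.smul_apply, LinearMap.id_apply, hv.apply_eq_smul,
    ← Complex.coe_algebraMap, algebraMap_smul, sub_self]

noncomputable def halfPlaneSign (μ : ℂ) : ℂ := if 0 < μ.im then I else -I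

theorem halfPlaneSign_conj {μ : ℂ} (hμ : μ.im ≠ 0) :
    halfPlaneSign (conj μ) = conj (halfPlaneSign μ) := by
  rcases hμ.lt_or_gt with hneg | hpos
  · simp [halfPlaneSign, hneg, hneg.not_gt]
  · simp [halfPlaneSign, hpos, hpos.not_gt]

theorem halfPlaneSign_mul_self (μ : ℂ) : halfPlaneSign μ * halfPlaneSign μ = -1 := by
  unfold halfPlaneSign; split_ifs <;> simp

theorem baseChange_apply_eq_halfPlaneSign_smul {L J : V →ₗ[ℝ] V} {k : ℕ}
    (hJ : ∀ μ : ℂ, 0 < μ.im →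
      End.genEigenspace (L.baseChange ℂ) μ k ≤ End.eigenspace (J.baseChange ℂ) I)
    {μ : ℂ} (hμ : μ.im ≠ 0) {v : ℂ ⊗[ℝ] V} (hv : v ∈ End.genEigenspace (L.baseChange ℂ) μ k) :
    J.baseChange ℂ v = halfPlaneSign μ • v := by
  rcases hμ.lt_or_gt with hneg | hpos
  · have hconj := End.mem_eigenspace_iff.mp
      (hJ (conj μ) (by simpa using hneg) (conjTensor_mem_genEigenspace_baseChange hv))
    calc J.baseChange ℂ v = J.baseChange ℂ (conjTensor (conjTensor v)) := by
          rw [conjTensor_conjTensor]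
      _ = conjTensor (J.baseChange ℂ (conjTensor v)) := (conjTensor_baseChange J _).symm
      _ = halfPlaneSign μ • v := by
          rw [hconj, conjTensor_smul, conjTensor_conjTensor, halfPlaneSign, if_neg hneg.not_gt,
            conj_I]
  · rw [halfPlaneSign, if_pos hpos]
    exact End.mem_eigenspace_iff.mp (hJ μ hpos hv)

variable [FiniteDimensional ℝ V]

theorem exists_aeval_baseChange_apply_eq_halfPlaneSign_smul {L : V →ₗ[ℝ] V}
    (hL : ∀ r : ℝ, LinearMap.ker (L - r • LinearMap.id) = ⊥) :
    ∃ r : ℝ[X], ∀ μ, End.HasEigenvalue (L.baseChange ℂ) μ →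
      ∀ v ∈ End.genEigenspace (L.baseChange ℂ) μ (finrank ℝ V),
        (aeval L r).baseChange ℂ v = halfPlaneSign μ • v := by
  obtain ⟨r, hr⟩ := exists_real_forall_X_sub_C_pow_dvd_sub_C
    (End.finite_hasEigenvalue (L.baseChange ℂ)).toFinset (finrank ℝ V) halfPlaneSign
    fun μ hμ ↦ halfPlaneSign_conj (im_ne_zero_of_hasEigenvalue_baseChange hL (by simpa using hμ))
  refine ⟨r, fun μ hμ v hv ↦ ?_⟩
  rw [LinearMap.baseChange_aeval]
  exact End.aeval_apply_of_mem_genEigenspace (hr μ (by simpa using hμ)) hv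

theorem eq_of_forall_genEigenspace_baseChange_apply_eq {L J₁ J₂ : V →ₗ[ℝ] V}
    (h : ∀ μ, End.HasEigenvalue (L.baseChange ℂ) μ →
      ∀ v ∈ End.genEigenspace (L.baseChange ℂ) μ (finrank ℝ V),
        J₁.baseChange ℂ v = J₂.baseChange ℂ v) :
    J₁ = J₂ :=
  LinearMap.baseChangeHom_injective ℝ V ℂ <|
    End.ext_of_forall_genEigenspace_finrank (f := L.baseChange ℂ) fun μ hμ v hv ↦
      h μ hμ v (by rwa [finrank_baseChange] at hv)

end Complexification

/-- canonical complex structure associated with an operator with no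
real eigenvalues: there is a unique `J` with `J² = -id`, `JL = LJ`, and such that
for every eigenvalue `μ` of the complexification with positive imaginary part,
the generalized `μ`-eigenspace of `L_ℂ` lies in the `i`-eigenspace of `J_ℂ`. -/
theorem canonical_complex_structure
    (V : Type*) [AddCommGroup V] [Module ℝ V] [FiniteDimensional ℝ V]
    (L : V →ₗ[ℝ] V)
    (hnoreal : ∀ μ : ℝ, LinearMap.ker (L - μ • LinearMap.id) = ⊥) :
    ∃! J : V →ₗ[ℝ] V,
      J ∘ₗ J = -LinearMap.id ∧
      J ∘ₗ L = L ∘ₗ J ∧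
      ∀ μ : ℂ, 0 < μ.im →
        LinearMap.ker
          ((LinearMap.baseChange ℂ L - μ • LinearMap.id :
              Module.End ℂ (ℂ ⊗[ℝ] V)) ^ Module.finrank ℝ V)
          ≤ LinearMap.ker
            (LinearMap.baseChange ℂ J - Complex.I • LinearMap.id :
              Module.End ℂ (ℂ ⊗[ℝ] V)) := by
  set A : End ℂ (ℂ ⊗[ℝ] V) := L.baseChange ℂ
  have hiii_iff : ∀ J : V →ₗ[ℝ] V,
      (∀ μ : ℂ, 0 < μ.im → LinearMap.ker ((A - μ • LinearMap.id) ^ finrank ℝ V)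
        ≤ LinearMap.ker (J.baseChange ℂ - I • LinearMap.id)) ↔
      ∀ μ : ℂ, 0 < μ.im →
        A.genEigenspace μ (finrank ℝ V) ≤ End.eigenspace (J.baseChange ℂ) I := fun _ ↦ by
    simp only [End.genEigenspace_nat, End.eigenspace_def, End.one_eq_id]
  obtain ⟨r, hr⟩ := exists_aeval_baseChange_apply_eq_halfPlaneSign_smul hnoreal
  refine ⟨aeval L r, ⟨?_, ?_, ?_⟩, fun J hJ ↦ ?_⟩
  · refine eq_of_forall_genEigenspace_baseChange_apply_eq (L := L) fun μ hμ v hv ↦ ?_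
    simp [LinearMap.baseChange_comp, hr μ hμ v hv, smul_smul, halfPlaneSign_mul_self]
  · have hcomm := (Commute.all r X).map (aeval L)
    rw [aeval_X] at hcomm
    exact hcomm.eq
  · refine (hiii_iff _).mpr fun μ hμ v hv ↦ End.mem_eigenspace_iff.mpr ?_
    by_cases hμ_eig : A.HasEigenvalue μ
    · rw [hr μ hμ_eig v hv, halfPlaneSign, if_pos hμ]
    · simp [End.eq_zero_of_mem_genEigenspace_of_not_hasEigenvalue hμ_eig hv]
  · refine eq_of_forall_genEigenspace_baseChange_apply_eq (L := L) fun μ hμ v hv ↦ ?_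
    rw [baseChange_apply_eq_halfPlaneSign_smul ((hiii_iff J).mp hJ.2.2)
      (im_ne_zero_of_hasEigenvalue_baseChange hnoreal hμ) hv, hr μ hμ v hv]
end

section
/- Selfadjointness of the canonical complex structure. Let V be a finite-dimensional real vector space, g a nondegenerate symmetric bilinear form on V, and L : V → V a g-selfadjoint linear map (g(Lv, w) = g(v, Lw) for all v, w) with no real eigenvalues. Let J : V → V be the unique linear map with J∘J = −id_V, J∘L = L∘J, and such that for every μ ∈ ℂ with Im μ > 0 the generalized eigenspace of the complexification L_ℂ for μ is contained in ker(J_ℂ − i·id). Then J is g-selfadjoint as well: g(Ju, v) = g(u, Jv) for all u, v ∈ V. -/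
/-!
The generalized eigenspaces `E_μ` of `L_ℂ` span `ℂ ⊗ V`, and since `L_ℂ` is selfadjoint for the
complexified form they are pairwise orthogonal. `J_ℂ` acts on each `E_μ` by a scalar: by `i` if
`Im μ > 0`; by `-i` if `Im μ < 0`, because `J` is real and complex conjugation maps `E_μ` onto
`E_{conj μ}`; and `E_μ = 0` for real `μ`. An operator acting by scalars on pairwise orthogonal
spanning subspaces is selfadjoint, and selfadjointness descends from `ℂ ⊗ V` to `V`.
-/

open TensorProduct Module.End ComplexConjugate

namespace LinearMap.IsSelfAdjoint

variable {R M : Type*} [CommRing R] [IsDomain R] [AddCommGroup M] [Module R M]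
  {B : LinearMap.BilinForm R M} {f : Module.End R M}

theorem apply_eq_zero_of_pow_sub_smul_apply_eq_zero
    (hf : B.IsSelfAdjoint f) {μ ν : R} (hμν : μ ≠ ν) :
    ∀ (j l : ℕ) {x y : M}, ((f - μ • 1) ^ j) x = 0 → ((f - ν • 1) ^ l) y = 0 → B x y = 0 := by
  intro j
  induction j with
  | zero => intro l x y hx _; simp_all
  | succ j ihj =>
    intro l
    induction l with
    | zero => intro x y _ hy; simp_all
    | succ l ihl =>
      intro x y hx hy
      rw [pow_succ, Module.End.mul_apply] at hx hy
      have hμ : B (f x) y = μ * B x y := by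
        simpa [sub_eq_zero] using ihj (l + 1) hx (by rwa [pow_succ, Module.End.mul_apply])
      have hν : B x (f y) = ν * B x y := by
        simpa [sub_eq_zero] using ihl (by rwa [pow_succ, Module.End.mul_apply]) hy
      have : (μ - ν) * B x y = 0 := by rw [sub_mul, ← hμ, ← hν, hf, sub_self]
      exact (mul_eq_zero.mp this).resolve_left (sub_ne_zero.mpr hμν)

theorem apply_eq_zero_of_mem_maxGenEigenspace (hf : B.IsSelfAdjoint f) {μ ν : R} (hμν : μ ≠ ν)
    {x y : M} (hx : x ∈ f.maxGenEigenspace μ) (hy : y ∈ f.maxGenEigenspace ν) : B x y = 0 := by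
  obtain ⟨j, hx⟩ := (mem_maxGenEigenspace f μ x).mp hx
  obtain ⟨l, hy⟩ := (mem_maxGenEigenspace f ν y).mp hy
  exact hf.apply_eq_zero_of_pow_sub_smul_apply_eq_zero hμν j l hx hy

end LinearMap.IsSelfAdjoint

theorem LinearMap.isSelfAdjoint_of_forall_maxGenEigenspace_smul {K M : Type*} [Field K]
    [IsAlgClosed K] [AddCommGroup M] [Module K M] [FiniteDimensional K M]
    {B : LinearMap.BilinForm K M} {f T : Module.End K M} (hf : B.IsSelfAdjoint f)
    (hT : ∀ μ, ∃ c : K, ∀ x ∈ f.maxGenEigenspace μ, T x = c • x) : B.IsSelfAdjoint T := by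
  have hspan : ∀ x : M, x ∈ ⨆ μ, f.maxGenEigenspace μ := fun x ↦ by
    rw [iSup_maxGenEigenspace_eq_top]; trivial
  have hpair : ∀ μ ν, ∀ x ∈ f.maxGenEigenspace μ, ∀ y ∈ f.maxGenEigenspace ν,
      B (T x) y = B x (T y) := by
    intro μ ν x hx y hy
    obtain ⟨c, hc⟩ := hT μ
    obtain ⟨d, hd⟩ := hT ν
    rcases eq_or_ne μ ν with rfl | hμν
    · rw [hc x hx, hc y hy, map_smul, map_smul, LinearMap.smul_apply]
    · have hxy := hf.apply_eq_zero_of_mem_maxGenEigenspace hμν hx hy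
      rw [hc x hx, hd y hy, map_smul, map_smul, LinearMap.smul_apply, hxy, smul_zero, smul_zero]
  intro x y
  induction hspan x using Submodule.iSup_induction' with
  | mem μ x hx =>
    induction hspan y using Submodule.iSup_induction' with
    | mem ν y hy => exact hpair μ ν x hx y hy
    | zero => simp
    | add y y' _ _ h h' => simp only [map_add, h, h']
  | zero => simp
  | add x x' _ _ h h' => simp only [map_add, LinearMap.add_apply, h, h']

section BaseChange

variable {R A M : Type*} [CommRing R] [CommRing A] [Algebra R A] [AddCommGroup M] [Module R M]
  {B : LinearMap.BilinForm R M} {f : Module.End R M}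

theorem LinearMap.IsSelfAdjoint.baseChange (hf : B.IsSelfAdjoint f) :
    (B.baseChange A).IsSelfAdjoint (f.baseChange A) := by
  intro x y
  induction x using TensorProduct.induction_on with
  | zero => simp
  | add x x' hx hx' => simp only [map_add, LinearMap.add_apply, hx, hx']
  | tmul a v =>
    induction y using TensorProduct.induction_on with
    | zero => simp
    | add y y' hy hy' => simp only [map_add, hy, hy']
    | tmul b w => simp only [LinearMap.baseChange_tmul, LinearMap.BilinForm.baseChange_tmul, hf v w]

theorem LinearMap.IsSelfAdjoint.of_baseChange [FaithfulSMul R A]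
    (hf : (B.baseChange A).IsSelfAdjoint (f.baseChange A)) : B.IsSelfAdjoint f := by
  intro v w
  have := hf (1 ⊗ₜ v) (1 ⊗ₜ w)
  simp only [LinearMap.baseChange_tmul, LinearMap.BilinForm.baseChange_tmul, mul_one,
    Algebra.smul_def] at this
  exact FaithfulSMul.algebraMap_injective R A this

theorem Module.End.maxGenEigenspace_baseChange_eq_bot [Module.Flat R A] {r : R}
    (h : f.eigenspace r = ⊥) : maxGenEigenspace (f.baseChange A) (algebraMap R A r) = ⊥ := by
  rw [eigenspace_def, LinearMap.ker_eq_bot] at h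
  have hinj : Function.Injective ((f - r • 1).baseChange A) := by
    rw [LinearMap.baseChange_eq_ltensor]
    exact Module.Flat.lTensor_preserves_injective_linearMap _ h
  have hsub : f.baseChange A - algebraMap R A r • 1 = (f - r • 1).baseChange A := by
    rw [LinearMap.baseChange_sub, LinearMap.baseChange_smul, LinearMap.baseChange_one,
      algebraMap_smul]
  refine (Submodule.eq_bot_iff _).mpr fun x hx ↦ ?_
  obtain ⟨k, hk⟩ := (mem_maxGenEigenspace _ _ x).mp hx
  rw [hsub, Module.End.coe_pow] at hk
  exact hinj.iterate k (by rw [hk, iterate_map_zero])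

end BaseChange

section ComplexConj

variable {V : Type*} [AddCommGroup V] [Module ℝ V]

variable (V) in
noncomputable def complexConj : ℂ ⊗[ℝ] V →ₗ⋆[ℂ] ℂ ⊗[ℝ] V where
  toFun := Complex.conjAe.toLinearMap.rTensor V
  map_add' := map_add _
  map_smul' c x := by
    induction x using TensorProduct.induction_on with
    | zero => simp
    | tmul a v => simp [TensorProduct.smul_tmul']
    | add x y hx hy => simp only [smul_add, map_add, hx, hy]

@[simp]
theorem complexConj_tmul (c : ℂ) (v : V) : complexConj V (c ⊗ₜ v) = conj c ⊗ₜ v := rfl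

@[simp]
theorem complexConj_complexConj (x : ℂ ⊗[ℝ] V) : complexConj V (complexConj V x) = x := by
  induction x using TensorProduct.induction_on with
  | zero => simp
  | tmul c v => simp
  | add x y hx hy => rw [map_add, map_add, hx, hy]

@[simp]
theorem complexConj_baseChange (f : Module.End ℝ V) (x : ℂ ⊗[ℝ] V) :
    complexConj V (f.baseChange ℂ x) = f.baseChange ℂ (complexConj V x) := by
  induction x using TensorProduct.induction_on with
  | zero => simp
  | tmul c v => simp
  | add x y hx hy => rw [map_add, map_add, hx, hy, map_add, map_add]

theorem complexConj_mem_maxGenEigenspace {f : Module.End ℝ V} {μ : ℂ} {x : ℂ ⊗[ℝ] V}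
    (hx : x ∈ maxGenEigenspace (f.baseChange ℂ) μ) :
    complexConj V x ∈ maxGenEigenspace (f.baseChange ℂ) (conj μ) := by
  obtain ⟨k, hk⟩ := (mem_maxGenEigenspace _ _ x).mp hx
  have hsemiconj : Function.Semiconj (complexConj V) ⇑(f.baseChange ℂ - μ • 1)
      ⇑(f.baseChange ℂ - conj μ • 1) := fun y ↦ by simp
  refine (mem_maxGenEigenspace _ _ _).mpr ⟨k, ?_⟩
  rw [Module.End.coe_pow] at hk ⊢
  rw [← (hsemiconj.iterate_right k).eq, hk, map_zero]

theorem baseChange_apply_eq_conj_smul_of_mem_maxGenEigenspace_conj {f T : Module.End ℝ V}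
    {μ c : ℂ} (hT : ∀ x ∈ maxGenEigenspace (f.baseChange ℂ) μ, T.baseChange ℂ x = c • x)
    {x : ℂ ⊗[ℝ] V} (hx : x ∈ maxGenEigenspace (f.baseChange ℂ) (conj μ)) :
    T.baseChange ℂ x = conj c • x := by
  have h := hT _ (by simpa using complexConj_mem_maxGenEigenspace hx)
  simpa using congrArg (complexConj V) h

end ComplexConj

theorem canonical_complex_structure_selfadjoint_general
    (V : Type*) [AddCommGroup V] [Module ℝ V] [FiniteDimensional ℝ V]
    (g : V →ₗ[ℝ] V →ₗ[ℝ] ℝ)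
    (L : V →ₗ[ℝ] V)
    (hsa : ∀ v w : V, g (L v) w = g v (L w))
    (hnoreal : ∀ μ : ℝ, LinearMap.ker (L - μ • LinearMap.id) = ⊥)
    (J : V →ₗ[ℝ] V)
    (hJeig : ∀ μ : ℂ, 0 < μ.im →
      LinearMap.ker
        ((LinearMap.baseChange ℂ L - μ • LinearMap.id :
            Module.End ℂ (ℂ ⊗[ℝ] V)) ^ Module.finrank ℝ V)
        ≤ LinearMap.ker
          (LinearMap.baseChange ℂ J - Complex.I • LinearMap.id :
            Module.End ℂ (ℂ ⊗[ℝ] V))) :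
    ∀ u v : V, g (J u) v = g u (J v) := by
  have hL : g.IsSelfAdjoint L := hsa
  have hupper : ∀ μ : ℂ, 0 < μ.im →
      ∀ x ∈ maxGenEigenspace (L.baseChange ℂ) μ, J.baseChange ℂ x = Complex.I • x := by
    intro μ hμ x hx
    rw [maxGenEigenspace_eq_genEigenspace_finrank, Module.finrank_baseChange,
      genEigenspace_nat] at hx
    simpa [sub_eq_zero] using hJeig μ hμ hx
  have hscalar : ∀ μ : ℂ, ∃ c : ℂ,
      ∀ x ∈ maxGenEigenspace (L.baseChange ℂ) μ, J.baseChange ℂ x = c • x := by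
    intro μ
    rcases lt_trichotomy μ.im 0 with hμ | hμ | hμ
    · refine ⟨conj Complex.I, fun x hx ↦ ?_⟩
      refine baseChange_apply_eq_conj_smul_of_mem_maxGenEigenspace_conj
        (hupper (conj μ) (by simpa using hμ)) ?_
      rwa [Complex.conj_conj]
    · have hreal : maxGenEigenspace (L.baseChange ℂ) μ = ⊥ := by
        have hμre : μ = algebraMap ℝ ℂ μ.re := Complex.ext (by simp) (by simp [hμ])
        rw [hμre]
        exact maxGenEigenspace_baseChange_eq_bot (by rw [eigenspace_def]; exact hnoreal μ.re)
      refine ⟨0, fun x hx ↦ ?_⟩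
      rw [hreal, Submodule.mem_bot] at hx
      simp [hx]
    · exact ⟨Complex.I, hupper μ hμ⟩
  exact LinearMap.IsSelfAdjoint.of_baseChange
    (LinearMap.isSelfAdjoint_of_forall_maxGenEigenspace_smul hL.baseChange hscalar)

/-- the canonical complex structure `J` associated with a
`g`-selfadjoint operator `L` without real eigenvalues is itself `g`-selfadjoint. -/
theorem canonical_complex_structure_selfadjoint
    (V : Type*) [AddCommGroup V] [Module ℝ V] [FiniteDimensional ℝ V]
    (g : V →ₗ[ℝ] V →ₗ[ℝ] ℝ)
    (hsymm : ∀ v w : V, g v w = g w v)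
    (hnd : ∀ v : V, (∀ w : V, g v w = 0) → v = 0)
    (L : V →ₗ[ℝ] V)
    (hsa : ∀ v w : V, g (L v) w = g v (L w))
    (hnoreal : ∀ μ : ℝ, LinearMap.ker (L - μ • LinearMap.id) = ⊥)
    (J : V →ₗ[ℝ] V)
    (hJ2 : J ∘ₗ J = -LinearMap.id)
    (hJL : J ∘ₗ L = L ∘ₗ J)
    (hJeig : ∀ μ : ℂ, 0 < μ.im →
      LinearMap.ker
        ((LinearMap.baseChange ℂ L - μ • LinearMap.id :
            Module.End ℂ (ℂ ⊗[ℝ] V)) ^ Module.finrank ℝ V)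
        ≤ LinearMap.ker
          (LinearMap.baseChange ℂ J - Complex.I • LinearMap.id :
            Module.End ℂ (ℂ ⊗[ℝ] V))) :
    ∀ u v : V, g (J u) v = g u (J v) :=
  canonical_complex_structure_selfadjoint_general V g L hsa hnoreal J hJeig
end

section
/- Convergence of polynomial functional calculus under uniform approximation near the spectrum. Let K ⊆ ℂ be compact and let L ∈ Mat_n(ℝ) be such that every complex eigenvalue of L lies in the interior of K. Let (P_i) be a sequence of polynomials with real coefficients that converges uniformly on K (as functions K → ℂ) to a function f : K → ℂ. Then the sequence of matrices (P_i(L)) converges in Mat_n(ℝ); the limit depends only on f, in the sense that if (Q_i) is another sequence of real polynomials converging uniformly to f on K, then lim_i P_i(L) = lim_i Q_i(L); and the set of complex eigenvalues of the limit matrix equals { f(μ) : μ a complex eigenvalue of L }. -/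
/-!
The map `P ↦ P(L)` factors linearly through the jet of `P` at the eigenvalues of `L`, i.e. the
values `P⁽ᵏ⁾(λ)` for `k < n`: if they all vanish, the characteristic polynomial divides `P`, and
Cayley–Hamilton gives `P(L) = 0`. By Weierstrass' theorem the jets of the `Pᵢ` converge to the
jet of `f`, which is then the jet of some real polynomial `R` since the range of the jet map is
finite-dimensional, hence closed. A linear map out of a finite-dimensional space is continuous,
so `Pᵢ(L) → R(L)` for every approximating sequence, and the spectral mapping theorem for `R`
gives `σ(R(L)) = R(σ(L)) = f(σ(L))`.
-/

open Matrix Polynomial Filter Topology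

theorem LinearMap.exists_comp_eq_of_ker_le {K V U W : Type*} [DivisionRing K]
    [AddCommGroup V] [Module K V] [AddCommGroup U] [Module K U] [AddCommGroup W] [Module K W]
    (J : V →ₗ[K] U) (T : V →ₗ[K] W) (h : ker J ≤ ker T) : ∃ Φ : U →ₗ[K] W, Φ ∘ₗ J = T := by
  obtain ⟨g, hg⟩ := ((ker J).liftQ J le_rfl).exists_leftInverse_of_injective
    ((ker J).ker_liftQ_eq_bot J le_rfl le_rfl)
  refine ⟨(ker J).liftQ T h ∘ₗ g, LinearMap.ext fun x => ?_⟩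
  have hx : g (J x) = (ker J).mkQ x := LinearMap.congr_fun hg ((ker J).mkQ x)
  simp [hx]

theorem LinearMap.tendsto_of_ker_le {𝕜 V U W ι : Type*} [NontriviallyNormedField 𝕜]
    [CompleteSpace 𝕜] [AddCommGroup V] [Module 𝕜 V]
    [AddCommGroup U] [Module 𝕜 U] [TopologicalSpace U] [IsTopologicalAddGroup U]
    [ContinuousSMul 𝕜 U] [T2Space U] [FiniteDimensional 𝕜 U]
    [AddCommGroup W] [Module 𝕜 W] [TopologicalSpace W] [IsTopologicalAddGroup W]
    [ContinuousSMul 𝕜 W] (J : V →ₗ[𝕜] U) (T : V →ₗ[𝕜] W) (h : ker J ≤ ker T)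
    {l : Filter ι} {x : ι → V} {y : V} (hx : Tendsto (J ∘ x) l (𝓝 (J y))) :
    Tendsto (T ∘ x) l (𝓝 (T y)) := by
  obtain ⟨Φ, rfl⟩ := J.exists_comp_eq_of_ker_le T h
  exact (Φ.continuous_of_finiteDimensional.tendsto _).comp hx

theorem Polynomial.Splits.dvd_of_isRoot_iterate_derivative {F : Type*} [Field F] [CharZero F]
    {p q : F[X]} (hs : p.Splits) (hp : p ≠ 0)
    (h : ∀ a ∈ p.roots, ∀ k < p.natDegree, (derivative^[k] q).IsRoot a) : p ∣ q := by
  classical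
  rcases eq_or_ne q 0 with rfl | hq
  · exact dvd_zero p
  refine hs.dvd_of_roots_le_roots hp (Multiset.le_iff_count.2 fun a => ?_)
  by_cases ha : a ∈ p.roots
  · have hcard : Multiset.card p.roots ≤ p.natDegree := card_roots' p
    have hpos : 0 < Multiset.card p.roots := Multiset.card_pos_iff_exists_mem.2 ⟨a, ha⟩
    calc p.roots.count a ≤ p.natDegree := (p.roots.count_le_card a).trans hcard
      _ ≤ q.roots.count a := by
        rw [count_roots]
        have := lt_rootMultiplicity_of_isRoot_iterate_derivative (n := p.natDegree - 1) hq
          fun m hm => h a ha m (by omega)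
        omega
  · simp [Multiset.count_eq_zero_of_notMem ha]

noncomputable def Polynomial.jet {R A : Type*} [CommSemiring R] [CommSemiring A] [Algebra R A]
    (S : Finset A) (N : ℕ) : R[X] →ₗ[R] (S × Fin N → A) :=
  LinearMap.pi fun p => (aeval (p.1 : A)).toLinearMap ∘ₗ derivative ^ (p.2 : ℕ)

theorem Polynomial.jet_apply {R A : Type*} [CommSemiring R] [CommSemiring A] [Algebra R A]
    (S : Finset A) (N : ℕ) (q : R[X]) (p : S × Fin N) :
    jet S N q p = aeval (p.1 : A) (derivative^[p.2] q) := by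
  simp [jet, Module.End.pow_apply]

theorem Matrix.ker_jet_le_ker_aeval {n K F : Type*} [Fintype n] [DecidableEq n] [Field K]
    [Field F] [DecidableEq F] [IsAlgClosed F] [CharZero F] [Algebra K F] (A : Matrix n n K) :
    LinearMap.ker (jet (R := K) (A.map (algebraMap K F)).charpoly.roots.toFinset (Fintype.card n)) ≤
      LinearMap.ker (aeval A).toLinearMap := by
  intro q hq
  have hdvd : A.charpoly.map (algebraMap K F) ∣ q.map (algebraMap K F) := by
    rw [← charpoly_map]
    refine (IsAlgClosed.splits _).dvd_of_isRoot_iterate_derivative (charpoly_monic _).ne_zero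
      fun a ha k hk => ?_
    rw [charpoly_natDegree_eq_dim] at hk
    have := congrFun (LinearMap.mem_ker.1 hq) (⟨a, Multiset.mem_toFinset.2 ha⟩, ⟨k, hk⟩)
    rwa [jet_apply, Pi.zero_apply, ← eval_map_algebraMap, ← iterate_derivative_map] at this
  obtain ⟨r, rfl⟩ := (map_dvd_map' _).1 hdvd
  simp [aeval_self_charpoly]

theorem Polynomial.iterate_deriv_aeval {𝕜 R : Type*} [NontriviallyNormedField 𝕜] [CommSemiring R]
    [Algebra R 𝕜] (q : R[X]) (k : ℕ) :
    deriv^[k] (fun z : 𝕜 => aeval z q) = fun z => aeval z (derivative^[k] q) := by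
  induction k with
  | zero => rfl
  | succ k ih =>
    rw [Function.iterate_succ_apply', ih, Function.iterate_succ_apply']
    funext z
    exact Polynomial.deriv_aeval _

theorem DifferentiableOn.iterate_deriv {E : Type*} [NormedAddCommGroup E] [NormedSpace ℂ E]
    [CompleteSpace E] {f : ℂ → E} {U : Set ℂ} (hf : DifferentiableOn ℂ f U) (hU : IsOpen U)
    (k : ℕ) :
    DifferentiableOn ℂ (_root_.deriv^[k] f) U := by
  induction k with
  | zero => exact hf
  | succ k ih => simpa only [Function.iterate_succ_apply'] using ih.deriv hU

theorem TendstoLocallyUniformlyOn.iterate_deriv {E ι : Type*} [NormedAddCommGroup E]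
    [NormedSpace ℂ E] [CompleteSpace E] {l : Filter ι} {F : ι → ℂ → E} {f : ℂ → E} {U : Set ℂ}
    (hf : TendstoLocallyUniformlyOn F f l U) (hF : ∀ᶠ i in l, DifferentiableOn ℂ (F i) U)
    (hU : IsOpen U) (k : ℕ) :
    TendstoLocallyUniformlyOn (fun i => _root_.deriv^[k] (F i)) (_root_.deriv^[k] f) l U := by
  induction k with
  | zero => exact hf
  | succ k ih =>
    simp only [Function.iterate_succ_apply']
    exact ih.deriv (hF.mono fun i hi => hi.iterate_deriv hU k) hU

theorem Polynomial.tendsto_jet_of_tendstoUniformlyOn {R ι : Type*} [CommSemiring R] [Algebra R ℂ]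
    {l : Filter ι} {K : Set ℂ} {S : Finset ℂ} (hS : (S : Set ℂ) ⊆ interior K) (N : ℕ)
    {Q : ι → R[X]} {f : ℂ → ℂ} (hQ : TendstoUniformlyOn (fun i z => aeval z (Q i)) f l K) :
    Tendsto (fun i => jet S N (Q i)) l (𝓝 fun p => deriv^[p.2] f p.1) := by
  refine tendsto_pi_nhds.2 fun p => ?_
  have hderiv := (hQ.tendstoLocallyUniformlyOn.mono interior_subset).iterate_deriv
    (Eventually.of_forall fun i => (Q i).differentiable_aeval.differentiableOn)
    isOpen_interior p.2
  simpa only [jet_apply, iterate_deriv_aeval] using hderiv.tendsto_at (hS p.1.2)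

theorem Matrix.spectrum_map_aeval {n K F : Type*} [Fintype n] [DecidableEq n] [Field K] [Field F]
    [IsAlgClosed F] [Algebra K F] (A : Matrix n n K) (q : K[X]) :
    spectrum F ((aeval A q).map (algebraMap K F)) =
      (fun z => aeval z q) '' spectrum F (A.map (algebraMap K F)) := by
  have hmap : (aeval A q).map (algebraMap K F) =
      aeval (A.map (algebraMap K F)) (q.map (algebraMap K F)) := by
    rw [aeval_map_algebraMap]
    exact (aeval_algHom_apply (Algebra.ofId K F).mapMatrix A q).symm
  rcases subsingleton_or_nontrivial (Matrix n n F) with h | h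
  · simp [spectrum.of_subsingleton]
  · rw [hmap, spectrum.map_polynomial_aeval_of_nonempty _ _
      (spectrum.nonempty_of_isAlgClosed_of_finiteDimensional F _)]
    simp [eval_map_algebraMap]

theorem polynomial_functional_calculus_convergence_general
    (n : ℕ) (K : Set ℂ)
    (L : Matrix (Fin n) (Fin n) ℝ)
    (hspec : spectrum ℂ (L.map (algebraMap ℝ ℂ)) ⊆ interior K)
    (P : ℕ → Polynomial ℝ) (f : ℂ → ℂ)
    (hconv : TendstoUniformlyOn (fun i (z : ℂ) => Polynomial.aeval z (P i)) f atTop K) :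
    ∃ M : Matrix (Fin n) (Fin n) ℝ,
      Tendsto (fun i => Polynomial.aeval L (P i)) atTop (nhds M) ∧
      (∀ Q : ℕ → Polynomial ℝ,
        TendstoUniformlyOn (fun i (z : ℂ) => Polynomial.aeval z (Q i)) f atTop K →
        Tendsto (fun i => Polynomial.aeval L (Q i)) atTop (nhds M)) ∧
      spectrum ℂ (M.map (algebraMap ℝ ℂ)) = f '' spectrum ℂ (L.map (algebraMap ℝ ℂ)) := by
  set χ := (L.map (algebraMap ℝ ℂ)).charpoly
  set J := jet (R := ℝ) χ.roots.toFinset (Fintype.card (Fin n))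
  have hroots : ∀ z, z ∈ χ.roots.toFinset ↔ z ∈ spectrum ℂ (L.map (algebraMap ℝ ℂ)) := fun z => by
    rw [Multiset.mem_toFinset, mem_spectrum_iff_isRoot_charpoly,
      mem_roots (charpoly_monic _).ne_zero]
  have hjets : ∀ Q : ℕ → ℝ[X], TendstoUniformlyOn (fun i (z : ℂ) => aeval z (Q i)) f atTop K →
      Tendsto (fun i => J (Q i)) atTop (𝓝 fun p => deriv^[p.2] f p.1) := fun Q =>
    tendsto_jet_of_tendstoUniformlyOn (fun z hz => hspec ((hroots z).1 hz)) _
  obtain ⟨R, hR⟩ : _ ∈ LinearMap.range J :=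
    (LinearMap.range J).closed_of_finiteDimensional.mem_of_tendsto (hjets P hconv)
      (Eventually.of_forall fun i => LinearMap.mem_range_self J (P i))
  have hlim : ∀ Q : ℕ → ℝ[X], TendstoUniformlyOn (fun i (z : ℂ) => aeval z (Q i)) f atTop K →
      Tendsto (fun i => aeval L (Q i)) atTop (𝓝 (aeval L R)) := fun Q hQ =>
    J.tendsto_of_ker_le (aeval L).toLinearMap L.ker_jet_le_ker_aeval (hR ▸ hjets Q hQ)
  refine ⟨aeval L R, hlim P hconv, hlim, ?_⟩
  rw [spectrum_map_aeval]
  refine Set.image_congr fun z hz => ?_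
  have hz' : z ∈ χ.roots.toFinset := (hroots z).2 hz
  have hpos : 0 < Fintype.card (Fin n) := charpoly_natDegree_eq_dim (L.map (algebraMap ℝ ℂ)) ▸
    (Multiset.card_pos_iff_exists_mem.2 ⟨z, Multiset.mem_toFinset.1 hz'⟩).trans_le (card_roots' χ)
  simpa [J, jet_apply] using congrFun hR (⟨z, hz'⟩, ⟨0, hpos⟩)

/-- convergence of the polynomial functional calculus under uniform
approximation near the spectrum, independence of the limit from the approximating
sequence, and the spectral mapping property of the limit. -/
theorem polynomial_functional_calculus_convergence
    (n : ℕ) (K : Set ℂ) (hK : IsCompact K)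
    (L : Matrix (Fin n) (Fin n) ℝ)
    (hspec : spectrum ℂ (L.map (algebraMap ℝ ℂ)) ⊆ interior K)
    (P : ℕ → Polynomial ℝ) (f : ℂ → ℂ)
    (hconv : TendstoUniformlyOn (fun i (z : ℂ) => Polynomial.aeval z (P i)) f atTop K) :
    ∃ M : Matrix (Fin n) (Fin n) ℝ,
      Tendsto (fun i => Polynomial.aeval L (P i)) atTop (nhds M) ∧
      (∀ Q : ℕ → Polynomial ℝ,
        TendstoUniformlyOn (fun i (z : ℂ) => Polynomial.aeval z (Q i)) f atTop K →
        Tendsto (fun i => Polynomial.aeval L (Q i)) atTop (nhds M)) ∧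
      spectrum ℂ (M.map (algebraMap ℝ ℂ)) = f '' spectrum ℂ (L.map (algebraMap ℝ ℂ)) :=
  polynomial_functional_calculus_convergence_general n K L hspec P f hconv
end
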